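/- arXiv:math/0110039 — 3 statements merged into one kernel-verified Lean document; each statement's English description precedes it below -/
import Mathlib

section
/- Let φ be a permutation of {1,…,k} that avoids the classical pattern 1-3-2, let m₀=k, m₁,…,m_r be its right-to-left maxima read from left to right, and write its canonical decomposition φ=(φ⁰,m₀,φ¹,m₁,…,φʳ,mʳ), where every entry of φⁱ is greater than every entry of φ^{i+1}. Let τ be a generalized pattern whose underlying permutation is φ and whose adjacency requirements occur only inside the blocks φⁱ (so τ=τ⁰-m₀-τ¹-m₁-⋯-τʳ-mʳ, each τⁱ being a generalized-pattern block whose underlying word is φⁱ). For 0≤j≤r define the prefixes π⁰=τ⁰ and πʲ=τ⁰-m₀-τ¹-m₁-⋯-τʲ-mⱼ for 1≤j≤r, and the suffixes σʲ=τʲ-mⱼ-⋯-τʳ-mᵣ for 0≤j≤r (each prefix and suffix regarded as a generalized pattern in its own right via order-isomorphic reduction of its letters), and set F_{π^{-1}}(x)=0. Then F_τ(x) = 1 + x·∑_{j=0}^{r} ( F_{πʲ}(x) − F_{π^{j-1}}(x) )·F_{σʲ}(x). -/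
open Finset PowerSeries

/-- A generalized pattern in the sense of Babson–Steingrímsson: a permutation of
`Fin k` together with a set of (0-indexed) positions `j` such that the letters in
positions `j` and `j+1` must be adjacent in any occurrence. -/
structure GenPattern (k : ℕ) where
  perm : Equiv.Perm (Fin k)
  adj : Set ℕ

/-- `f` is an occurrence of the generalized pattern `p` in the permutation `π`. -/
def GenPattern.Occ {k n : ℕ} (p : GenPattern k) (π : Equiv.Perm (Fin n))
    (f : Fin k → Fin n) : Prop :=
  StrictMono f ∧
  (∀ a b : Fin k, π (f a) < π (f b) ↔ p.perm a < p.perm b) ∧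
  (∀ j : ℕ, j ∈ p.adj → ∀ hj : j + 1 < k,
    ((f ⟨j + 1, hj⟩ : ℕ) = (f ⟨j, by omega⟩ : ℕ) + 1))

/-- `π` avoids the generalized pattern `p`. -/
def GenPattern.Avoids {k n : ℕ} (p : GenPattern k) (π : Equiv.Perm (Fin n)) : Prop :=
  ¬ ∃ f, p.Occ π f

/-- `π` contains exactly one occurrence of the generalized pattern `p`. -/
def GenPattern.ContainsOnce {k n : ℕ} (p : GenPattern k) (π : Equiv.Perm (Fin n)) : Prop :=
  ∃! f, p.Occ π f

/-- The classical pattern 1-3-2 (as a generalized pattern with no adjacencies). -/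
def pat132 : GenPattern 3 := ⟨Equiv.swap 1 2, ∅⟩

/-- `F_τ(x)`: generating function for permutations avoiding 1-3-2 and `p`. -/
noncomputable def Fgen {k : ℕ} (p : GenPattern k) : PowerSeries ℚ :=
  PowerSeries.mk fun n =>
    (Nat.card {π : Equiv.Perm (Fin n) // pat132.Avoids π ∧ p.Avoids π} : ℚ)

/-- `G_τ(x)`: generating function for permutations avoiding 1-3-2 and containing
`p` exactly once. -/
noncomputable def Ggen {k : ℕ} (p : GenPattern k) : PowerSeries ℚ :=
  PowerSeries.mk fun n =>
    (Nat.card {π : Equiv.Perm (Fin n) // pat132.Avoids π ∧ p.ContainsOnce π} : ℚ)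

/-- `H_τ(x)`: generating function for permutations containing 1-3-2 exactly once
and avoiding `p`. -/
noncomputable def Hgen {k : ℕ} (p : GenPattern k) : PowerSeries ℚ :=
  PowerSeries.mk fun n =>
    (Nat.card {π : Equiv.Perm (Fin n) // pat132.ContainsOnce π ∧ p.Avoids π} : ℚ)

/-- `Φ_τ(x)`: generating function for permutations containing both 1-3-2 and `p`
exactly once. -/
noncomputable def Phigen {k : ℕ} (p : GenPattern k) : PowerSeries ℚ :=
  PowerSeries.mk fun n =>
    (Nat.card {π : Equiv.Perm (Fin n) // pat132.ContainsOnce π ∧ p.ContainsOnce π} : ℚ)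

/-- `G_β^φ(x)`: generating function for permutations avoiding 1-3-2 and `φ` and
containing `β` exactly once. -/
noncomputable def Ggen2 {k l : ℕ} (β : GenPattern k) (φ : GenPattern l) : PowerSeries ℚ :=
  PowerSeries.mk fun n =>
    (Nat.card {π : Equiv.Perm (Fin n) //
      pat132.Avoids π ∧ φ.Avoids π ∧ β.ContainsOnce π} : ℚ)

/-- `V k = x^(k/2) · U_k(1/(2√x))`, the rescaled Chebyshev polynomials of the
second kind: `V 0 = V 1 = 1`, `V (k+2) = V (k+1) - x · V k`. -/
noncomputable def V : ℕ → PowerSeries ℚ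
  | 0 => 1
  | 1 => 1
  | (k + 2) => V (k + 1) - PowerSeries.X * V k

/-- Position `i` is a right-to-left maximum of `φ`. -/
def IsRLMax {k : ℕ} (φ : Equiv.Perm (Fin k)) (i : Fin k) : Prop :=
  ∀ j : Fin k, i < j → φ j < φ i

/-- `ρ` is the order-isomorphic reduction of the contiguous segment of `τ` of
length `t` starting at position `s` (adjacency requirements restricted to the
segment and shifted accordingly). -/
def IsReduction {k t : ℕ} (τ : GenPattern k) (s : ℕ) (ρ : GenPattern t) : Prop :=
  s + t ≤ k ∧
  (∀ (a b : Fin t) (ha : s + (a : ℕ) < k) (hb : s + (b : ℕ) < k),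
    (ρ.perm a < ρ.perm b ↔ τ.perm ⟨s + a, ha⟩ < τ.perm ⟨s + b, hb⟩)) ∧
  (∀ j : ℕ, j ∈ ρ.adj ↔ (s + j) ∈ τ.adj ∧ j + 1 < t)

/-!
Every 1-3-2-avoiding permutation of length `m + 1` is uniquely `(α, m + 1, β)` with every entry
of `α` above every entry of `β`, and `α`, `β` again 1-3-2-avoiding. In an occurrence of `τ` in
it, the last letter of `τ` sent weakly left of the maximum is a right-to-left maximum `m_j` of
`τ`, so `τ` occurs iff, for some `j`, the prefix `πʲ` occurs in `α` and the suffix `σʲ⁺¹` occurs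
in `β` (for `j = 0` the letter `m₀` goes to the maximum itself; `πʳ` alone and `σ⁰` alone are the
extreme cases). Sorting `α` by the first `j` for which it avoids `πʲ`, the permutation avoids `τ`
iff `β` avoids `σʲ`; the permutations avoiding 1-3-2 and `πʲ` but containing `π^{j-1}` are
counted by `F_{πʲ} - F_{π^{j-1}}`.
-/

theorem lt_iff_lt_of_forall_lt {k : ℕ} {β : Type*} [Preorder β] (u : Equiv.Perm (Fin k))
    {v : Fin k → β} (h : ∀ a b, u a < u b → v a < v b) (a b : Fin k) : v a < v b ↔ u a < u b := by
  have hs : StrictMono (v ∘ u.symm) := fun x y hxy => h _ _ (by simpa using hxy)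
  simpa using hs.lt_iff_lt (a := u a) (b := u b)

theorem lt_iff_lt_swap {α β : Type*} [LinearOrder α] [LinearOrder β] {x y : α} {u v : β}
    (hxy : x ≠ y) (huv : u ≠ v) (h : x < y ↔ u < v) : y < x ↔ v < u := by
  rw [lt_iff_not_ge, lt_iff_not_ge, le_iff_lt_or_eq, le_iff_lt_or_eq, h, or_iff_left hxy,
    or_iff_left huv]

namespace GenPattern

variable {k n : ℕ}

def Contains (τ : GenPattern k) (π : Equiv.Perm (Fin n)) : Prop := ∃ f, τ.Occ π f

theorem Occ.perm_eq_max_of_apply_eq_max {τ : GenPattern k} {π : Equiv.Perm (Fin n)}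
    {f : Fin k → Fin n} (hf : τ.Occ π f) {c : Fin k} (hc : (π (f c) : ℕ) = n - 1) :
    (τ.perm c : ℕ) = k - 1 := by
  by_contra hne
  have hk : 0 < k := c.pos
  set z := τ.perm.symm ⟨k - 1, by omega⟩
  have hz : (τ.perm z : ℕ) = k - 1 := by simp [z]
  have := Fin.lt_def.1 ((hf.2.1 c z).2 (Fin.lt_def.2 (by have := (τ.perm c).isLt; omega)))
  have := (π (f z)).isLt
  omega

theorem contains_of_len_zero (ρ : GenPattern 0) (π : Equiv.Perm (Fin n)) : ρ.Contains π :=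
  ⟨Fin.elim0, fun a => a.elim0, fun a => a.elim0, fun _ _ hj => by omega⟩

end GenPattern

open GenPattern

theorem contains132_iff {n : ℕ} {π : Equiv.Perm (Fin n)} :
    pat132.Contains π ↔ ∃ i j l : Fin n, i < j ∧ j < l ∧ π i < π l ∧ π l < π j := by
  constructor
  · rintro ⟨f, hmono, horder, -⟩
    refine ⟨f 0, f 1, f 2, hmono (by decide), hmono (by decide), (horder 0 2).2 (by decide),
      (horder 2 1).2 (by decide)⟩
  · rintro ⟨i, j, l, hij, hjl, hil, hlj⟩
    refine ⟨![i, j, l], Fin.strictMono_iff_lt_succ.2 ?_, lt_iff_lt_of_forall_lt _ ?_, ?_⟩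
    · intro c; fin_cases c <;> assumption
    · intro a b hab
      fin_cases a <;> fin_cases b <;>
        first | exact absurd hab (by decide) | simp [hil, hlj, hil.trans hlj]
    · simp [pat132]

theorem avoids132_apply_lt {n : ℕ} {π : Equiv.Perm (Fin n)} (hπ : pat132.Avoids π) {i j l : Fin n}
    (hij : i < j) (hjl : j < l) (hlj : π l < π j) : π l < π i := by
  refine lt_of_le_of_ne (not_lt.1 fun hil => hπ (contains132_iff.2 ⟨i, j, l, hij, hjl, hil, hlj⟩))
    fun h => (hij.trans hjl).ne' (π.injective h)

namespace IsReduction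

variable {k t t' n s s' : ℕ} {τ : GenPattern k} {ρ : GenPattern t} {ρ' : GenPattern t'}

theorem add_le (h : IsReduction τ s ρ) : s + t ≤ k := h.1

theorem perm_lt_perm_iff (h : IsReduction τ s ρ) {a b : Fin t} {c d : Fin k}
    (hc : (c : ℕ) = s + a) (hd : (d : ℕ) = s + b) :
    ρ.perm a < ρ.perm b ↔ τ.perm c < τ.perm d := by
  obtain ⟨c, hck⟩ := c
  obtain ⟨d, hdk⟩ := d
  simp only at hc hd
  subst hc hd
  exact h.2.1 a b hck hdk

theorem mem_adj_iff (h : IsReduction τ s ρ) (j : ℕ) : j ∈ ρ.adj ↔ s + j ∈ τ.adj ∧ j + 1 < t :=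
  h.2.2 j

theorem occ_restrict (h : IsReduction τ s ρ) {π : Equiv.Perm (Fin n)} {f : Fin k → Fin n}
    (hf : τ.Occ π f) :
    ρ.Occ π (fun a => f ⟨s + a, by have := h.add_le; omega⟩) := by
  obtain ⟨hmono, horder, hadj⟩ := hf
  refine ⟨fun a b hab => hmono (Fin.mk_lt_mk.2 (by simpa using hab)), fun a b => ?_, ?_⟩
  · rw [horder]
    exact (h.2.1 a b _ _).symm
  · intro j hj hjt
    have := hadj (s + j) ((h.mem_adj_iff j).1 hj).1 (by have := h.add_le; omega)
    simpa [← add_assoc] using this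

theorem sub (h : IsReduction τ s ρ) (h' : IsReduction τ s' ρ') (hs : s ≤ s')
    (ht : s' + t' ≤ s + t) : IsReduction ρ (s' - s) ρ' := by
  have := h.add_le
  refine ⟨by omega, fun a b ha hb => ?_, fun j => ?_⟩
  · rw [h'.perm_lt_perm_iff (c := ⟨s' + a, by omega⟩) (d := ⟨s' + b, by omega⟩) rfl rfl,
      h.perm_lt_perm_iff (c := ⟨s' + a, by omega⟩) (d := ⟨s' + b, by omega⟩) (by simp; omega)
        (by simp; omega)]
  · rw [h'.mem_adj_iff, h.mem_adj_iff, show s + (s' - s + j) = s' + j by omega]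
    constructor
    · exact fun ⟨h1, h2⟩ => ⟨⟨h1, by omega⟩, h2⟩
    · exact fun ⟨⟨h1, _⟩, h2⟩ => ⟨h1, h2⟩

theorem contains_of_contains (h : IsReduction τ s ρ) (h' : IsReduction τ s' ρ') (hs : s ≤ s')
    (ht : s' + t' ≤ s + t) {π : Equiv.Perm (Fin n)} (hρ : ρ.Contains π) : ρ'.Contains π :=
  hρ.elim fun _ hf => ⟨_, (h.sub h' hs ht).occ_restrict hf⟩

end IsReduction

theorem isReduction_of_len_zero {k s : ℕ} (τ : GenPattern k) (hs : s ≤ k) (ρ : GenPattern 0)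
    (hρ : ρ.adj = ∅) : IsReduction τ s ρ :=
  ⟨by omega, fun a => a.elim0, fun j => by simp [hρ]⟩

theorem isReduction_self {k : ℕ} {τ : GenPattern k} (h : ∀ j ∈ τ.adj, j + 1 < k) :
    IsReduction τ 0 τ :=
  ⟨by omega, fun a b _ _ => by simp, fun j => by simpa using fun hj => h j hj⟩

/-! ### Occurrences on sets of positions -/

namespace GenPattern

variable {k n : ℕ} {τ : GenPattern k} {π : Equiv.Perm (Fin n)} {S T : Set (Fin k)}
  {f : Fin k → Fin n}

structure OccOn (τ : GenPattern k) (π : Equiv.Perm (Fin n)) (S : Set (Fin k))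
    (f : Fin k → Fin n) : Prop where
  strictMonoOn : StrictMonoOn f S
  lt_iff_lt : ∀ a ∈ S, ∀ b ∈ S, π (f a) < π (f b) ↔ τ.perm a < τ.perm b
  adj : ∀ a ∈ S, ∀ b ∈ S, (a : ℕ) ∈ τ.adj → (b : ℕ) = a + 1 → (f b : ℕ) = f a + 1

theorem OccOn.occ (h : τ.OccOn π Set.univ f) : τ.Occ π f :=
  ⟨fun _ _ hab => h.strictMonoOn trivial trivial hab, fun a b => h.lt_iff_lt a trivial b trivial,
    fun _ hj _ => h.adj _ trivial _ trivial hj rfl⟩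

theorem occOn_of_subsingleton (hS : S.Subsingleton) : τ.OccOn π S f where
  strictMonoOn a ha b hb hab := absurd (hS ha hb) hab.ne
  lt_iff_lt a ha b hb := by rw [hS ha hb]; simp
  adj a ha b hb _ hba := by have := congrArg Fin.val (hS ha hb); omega

theorem OccOn.union (hS : τ.OccOn π S f) (hT : τ.OccOn π T f)
    (hlt : ∀ a ∈ S, ∀ b ∈ T, a < b) (hf : ∀ a ∈ S, ∀ b ∈ T, f a < f b)
    (hord : ∀ a ∈ S, ∀ b ∈ T, π (f a) < π (f b) ↔ τ.perm a < τ.perm b)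
    (hadj : ∀ a ∈ S, ∀ b ∈ T, (a : ℕ) ∈ τ.adj → (b : ℕ) = a + 1 → (f b : ℕ) = f a + 1) :
    τ.OccOn π (S ∪ T) f where
  strictMonoOn := by
    rintro a (ha | ha) b (hb | hb) hab
    exacts [hS.strictMonoOn ha hb hab, hf a ha b hb, absurd hab (hlt b hb a ha).not_gt,
      hT.strictMonoOn ha hb hab]
  lt_iff_lt := by
    rintro a (ha | ha) b (hb | hb)
    · exact hS.lt_iff_lt a ha b hb
    · exact hord a ha b hb
    · refine lt_iff_lt_swap (π.injective.ne (hf b hb a ha).ne) ?_ (hord b hb a ha)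
      exact τ.perm.injective.ne (hlt b hb a ha).ne
    · exact hT.lt_iff_lt a ha b hb
  adj := by
    rintro a (ha | ha) b (hb | hb) hA hba
    · exact hS.adj a ha b hb hA hba
    · exact hadj a ha b hb hA hba
    · exact absurd (hlt b hb a ha) (by rw [Fin.lt_def]; omega)
    · exact hT.adj a ha b hb hA hba

end GenPattern

theorem IsReduction.occOn {k t n s : ℕ} {τ : GenPattern k} {ρ : GenPattern t}
    (h : IsReduction τ s ρ) {π : Equiv.Perm (Fin n)} {f : Fin k → Fin n}
    (hf : ρ.Occ π (fun a => f ⟨s + a, by have := h.add_le; omega⟩)) :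
    τ.OccOn π {c | s ≤ (c : ℕ) ∧ (c : ℕ) < s + t} f := by
  obtain ⟨hmono, horder, hadj⟩ := hf
  have key : ∀ c : Fin k, s ≤ (c : ℕ) → (c : ℕ) < s + t →
      ∃ a : Fin t, (c : ℕ) = s + a ∧ f c = f ⟨s + a, by have := h.add_le; omega⟩ :=
    fun c h1 h2 => ⟨⟨c - s, by omega⟩, by simp; omega, congrArg f (Fin.ext (by simp; omega))⟩
  refine ⟨fun c hc d hd hcd => ?_, fun c hc d hd => ?_, fun c hc d hd hA hdc => ?_⟩
  · obtain ⟨a, ha, hfa⟩ := key c hc.1 hc.2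
    obtain ⟨b, hb, hfb⟩ := key d hd.1 hd.2
    rw [hfa, hfb]
    exact hmono (by rw [Fin.lt_def] at hcd ⊢; omega)
  · obtain ⟨a, ha, hfa⟩ := key c hc.1 hc.2
    obtain ⟨b, hb, hfb⟩ := key d hd.1 hd.2
    rw [hfa, hfb, ← h.perm_lt_perm_iff ha hb]
    exact horder a b
  · obtain ⟨a, ha, hfa⟩ := key c hc.1 hc.2
    have hd2 : (d : ℕ) < s + t := hd.2
    have hj : (a : ℕ) ∈ ρ.adj := (h.mem_adj_iff a).2 ⟨ha ▸ hA, by omega⟩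
    have := hadj a hj (by omega)
    rw [hfa, congrArg f (Fin.ext (by simp; omega) : d = ⟨s + (a + 1), by omega⟩)]
    simpa using this

/-! ### Splitting a permutation at its maximum -/

section Glue

variable {a b n : ℕ}

def glueVal (α : Equiv.Perm (Fin a)) (β : Equiv.Perm (Fin b)) (i : ℕ) : ℕ :=
  if hi : i < a then b + α ⟨i, hi⟩
  else if hi' : a < i ∧ i - (a + 1) < b then β ⟨i - (a + 1), hi'.2⟩
  else a + b

variable (α : Equiv.Perm (Fin a)) (β : Equiv.Perm (Fin b))

theorem glueVal_of_lt {i : ℕ} (hi : i < a) : glueVal α β i = b + α ⟨i, hi⟩ := by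
  simp [glueVal, hi]

theorem glueVal_self : glueVal α β a = a + b := by
  simp [glueVal]

theorem glueVal_of_gt {i : ℕ} (hi : a < i) (hib : i - (a + 1) < b) :
    glueVal α β i = β ⟨i - (a + 1), hib⟩ := by
  simp [glueVal, hi, hib, hi.not_gt]

theorem glueVal_lt {i : ℕ} (hi : i < a + 1 + b) : glueVal α β i < a + 1 + b := by
  rcases lt_trichotomy i a with h | rfl | h
  · rw [glueVal_of_lt α β h]; have := (α ⟨i, h⟩).isLt; omega
  · rw [glueVal_self]; omega
  · rw [glueVal_of_gt α β h (by omega)]; have := (β ⟨i - (a + 1), by omega⟩).isLt; omega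

theorem exists_glueVal_eq {i : ℕ} (hv : i < a + 1 + b) :
    ∃ j < a + 1 + b, glueVal α β j = i := by
  rcases lt_or_ge i b with h | h
  · refine ⟨a + 1 + β.symm ⟨i, h⟩, by omega, ?_⟩
    rw [glueVal_of_gt α β (by omega) (by simp)]
    simp
  · rcases lt_or_eq_of_le (Nat.le_of_lt_succ (by omega : i < a + b + 1)) with h' | rfl
    · refine ⟨α.symm ⟨i - b, by omega⟩, by omega, ?_⟩
      rw [glueVal_of_lt α β (α.symm _).isLt]
      simp only [Fin.eta, Equiv.apply_symm_apply]
      omega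
    · exact ⟨a, by omega, glueVal_self α β⟩

/-- The permutation `(α, n, β)`: the block `α` is shifted above the block `β`. -/
noncomputable def glue (h : a + 1 + b = n) (α : Equiv.Perm (Fin a)) (β : Equiv.Perm (Fin b)) :
    Equiv.Perm (Fin n) :=
  Equiv.ofBijective
    (fun i => ⟨glueVal α β i, by have := glueVal_lt α β (i := i) (by omega); omega⟩) <|
    Finite.surjective_iff_bijective.1 fun v => by
      obtain ⟨i, hi, hv⟩ := exists_glueVal_eq α β (i := v) (by omega)
      exact ⟨⟨i, by omega⟩, Fin.ext hv⟩

variable {α β} (h : a + 1 + b = n)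

theorem glue_apply_of_lt {i : Fin n} (hi : (i : ℕ) < a) :
    (glue h α β i : ℕ) = b + α ⟨i, hi⟩ :=
  glueVal_of_lt α β hi

theorem glue_apply_of_eq {i : Fin n} (hi : (i : ℕ) = a) : (glue h α β i : ℕ) = a + b := by
  show glueVal α β i = a + b
  rw [hi, glueVal_self]

theorem glue_apply_of_gt {i : Fin n} (hi : a < (i : ℕ)) :
    (glue h α β i : ℕ) = β ⟨i - (a + 1), by have := i.isLt; omega⟩ :=
  glueVal_of_gt α β hi _

theorem le_glue_apply {i : Fin n} (hi : (i : ℕ) ≤ a) : b ≤ (glue h α β i : ℕ) := by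
  rcases lt_or_eq_of_le hi with hi | hi
  · rw [glue_apply_of_lt h hi]; omega
  · rw [glue_apply_of_eq h hi]; omega

theorem glue_apply_lt {i : Fin n} (hi : a < (i : ℕ)) : (glue h α β i : ℕ) < b := by
  rw [glue_apply_of_gt h hi]; exact Fin.isLt _

theorem glue_apply_lt_glue_apply {i j : Fin n} (hi : (i : ℕ) ≤ a) (hj : a < (j : ℕ)) :
    glue h α β j < glue h α β i :=
  Fin.lt_def.2 ((glue_apply_lt h hj).trans_le (le_glue_apply h hi))

theorem glue_apply_eq_iff {i : Fin n} : (glue h α β i : ℕ) = a + b ↔ (i : ℕ) = a := by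
  refine ⟨fun hv => ?_, glue_apply_of_eq h⟩
  by_contra hne
  rcases Nat.lt_or_gt_of_ne hne with hi | hi
  · have := (α ⟨i, hi⟩).isLt; rw [glue_apply_of_lt h hi] at hv; omega
  · have := glue_apply_lt (α := α) (β := β) h hi; omega

end Glue

theorem glue_left_size_eq {n a b a' b' : ℕ} {h : a + 1 + b = n} {h' : a' + 1 + b' = n}
    {α : Equiv.Perm (Fin a)} {β : Equiv.Perm (Fin b)} {α' : Equiv.Perm (Fin a')}
    {β' : Equiv.Perm (Fin b')} (he : glue h α β = glue h' α' β') : a = a' := by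
  have := glue_apply_of_eq h (α := α) (β := β) (i := ⟨a, by omega⟩) rfl
  rw [he] at this
  exact (glue_apply_eq_iff h' (α := α') (β := β') (i := ⟨a, by omega⟩)).1 (by omega)

theorem glue_inj {n a b : ℕ} {h : a + 1 + b = n} {α α' : Equiv.Perm (Fin a)}
    {β β' : Equiv.Perm (Fin b)} (he : glue h α β = glue h α' β') : α = α' ∧ β = β' := by
  have hv : ∀ i : Fin n, (glue h α β i : ℕ) = glue h α' β' i := fun i => by rw [he]
  constructor
  · ext i
    have := hv ⟨i, by omega⟩
    rw [glue_apply_of_lt h i.isLt, glue_apply_of_lt h i.isLt] at this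
    simpa using this
  · ext i
    have hi : a < ((⟨a + 1 + i, by omega⟩ : Fin n) : ℕ) := by simp; omega
    have := hv ⟨a + 1 + i, by omega⟩
    rw [glue_apply_of_gt h hi, glue_apply_of_gt h hi] at this
    simpa using this

namespace GenPattern

variable {k a b n : ℕ} {ρ : GenPattern k} {α : Equiv.Perm (Fin a)} {β : Equiv.Perm (Fin b)}
  (h : a + 1 + b = n)

theorem Occ.glue_left {g : Fin k → Fin a} (hg : ρ.Occ α g) :
    ρ.Occ (glue h α β) (fun c => Fin.castLE (by omega) (g c)) := by
  obtain ⟨hmono, horder, hadj⟩ := hg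
  refine ⟨fun c d hcd => ?_, fun c d => ?_, fun j hj hjk => by simpa using hadj j hj hjk⟩
  · rw [Fin.lt_def, Fin.val_castLE, Fin.val_castLE]; exact hmono hcd
  · rw [← horder, Fin.lt_def, Fin.lt_def, glue_apply_of_lt h (by simp),
      glue_apply_of_lt h (by simp)]
    simp only [Fin.val_castLE, Fin.eta]
    omega

theorem Occ.glue_right {g : Fin k → Fin b} (hg : ρ.Occ β g) :
    ρ.Occ (glue h α β) (fun c => ⟨a + 1 + g c, by omega⟩) := by
  obtain ⟨hmono, horder, hadj⟩ := hg
  refine ⟨fun c d hcd => ?_, fun c d => ?_, fun j hj hjk => ?_⟩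
  · have := Fin.lt_def.1 (hmono hcd); rw [Fin.lt_def]; simp only; omega
  · rw [← horder, Fin.lt_def, Fin.lt_def, glue_apply_of_gt h (by simp; omega),
      glue_apply_of_gt h (by simp; omega)]
    simp
  · have := hadj j hj hjk; simp only; omega

theorem Contains.glue_left (hα : ρ.Contains α) : ρ.Contains (glue h α β) :=
  hα.elim fun _ hg => ⟨_, hg.glue_left h⟩

theorem Contains.glue_right (hβ : ρ.Contains β) : ρ.Contains (glue h α β) :=
  hβ.elim fun _ hg => ⟨_, hg.glue_right h⟩

theorem Occ.contains_left {f : Fin k → Fin n} (hf : ρ.Occ (glue h α β) f)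
    (hfa : ∀ c, (f c : ℕ) < a) : ρ.Contains α := by
  obtain ⟨hmono, horder, hadj⟩ := hf
  refine ⟨fun c => ⟨f c, hfa c⟩, fun c d hcd => hmono hcd, fun c d => ?_,
    fun j hj hjk => by simpa using hadj j hj hjk⟩
  beta_reduce
  rw [← horder, Fin.lt_def, Fin.lt_def (a := glue h α β _), glue_apply_of_lt h (hfa c),
    glue_apply_of_lt h (hfa d)]
  omega

theorem Occ.contains_right {f : Fin k → Fin n} (hf : ρ.Occ (glue h α β) f)
    (hfa : ∀ c, a < (f c : ℕ)) : ρ.Contains β := by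
  obtain ⟨hmono, horder, hadj⟩ := hf
  refine ⟨fun c => ⟨f c - (a + 1), by have := (f c).isLt; have := hfa c; omega⟩, fun c d hcd => ?_,
    fun c d => ?_, fun j hj hjk => ?_⟩
  · have := Fin.lt_def.1 (hmono hcd); have := hfa c; rw [Fin.lt_def]; simp only; omega
  · rw [← horder, Fin.lt_def (a := glue h α β _), glue_apply_of_gt h (hfa c),
      glue_apply_of_gt h (hfa d), Fin.lt_def]
  · have := hadj j hj hjk; have := hfa ⟨j, by omega⟩; simp only; omega

end GenPattern

section Avoid132

variable {a b n : ℕ} {α : Equiv.Perm (Fin a)} {β : Equiv.Perm (Fin b)}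

theorem avoids132_glue_iff (h : a + 1 + b = n) :
    pat132.Avoids (glue h α β) ↔ pat132.Avoids α ∧ pat132.Avoids β := by
  refine ⟨fun hg => ⟨fun hα => hg (Contains.glue_left h hα),
    fun hβ => hg (Contains.glue_right h hβ)⟩, ?_⟩
  rintro ⟨hα, hβ⟩ ⟨f, hf⟩
  have hmono : StrictMono f := hf.1
  have h02 : glue h α β (f 0) < glue h α β (f 2) := (hf.2.1 0 2).2 (by decide)
  have h21 : glue h α β (f 2) < glue h α β (f 1) := (hf.2.1 2 1).2 (by decide)
  -- by layering, the `1` and the `2` of an occurrence lie in the same block, not at the maximum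
  have hzone : (f 2 : ℕ) < a ∨ a < (f 0 : ℕ) := by
    by_contra! hc
    rcases lt_or_eq_of_le hc.1 with h2 | h2
    · exact h02.not_gt (glue_apply_lt_glue_apply h hc.2 h2)
    · have := (glue h α β (f 1)).isLt
      rw [Fin.lt_def, glue_apply_of_eq h h2.symm] at h21
      omega
  rcases hzone with h2 | h0
  · exact hα (hf.contains_left h fun c => lt_of_le_of_lt (Fin.le_def.1 (hmono.monotone
      (Fin.le_def.2 (by have := c.isLt; simp; omega)))) h2)
  · exact hβ (hf.contains_right h fun c => lt_of_lt_of_le h0 (Fin.le_def.1 (hmono.monotone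
      (Fin.le_def.2 (by simp)))))

end Avoid132

section Decomposition

theorem card_le_of_forall_apply_lt {n : ℕ} (π : Equiv.Perm (Fin n)) {S : Finset (Fin n)} {v : Fin n}
    (h : ∀ i ∈ S, π i < v) : S.card ≤ v := by
  have := Finset.card_le_card (s := S.image π) (t := Finset.Iio v) (by simpa [Finset.subset_iff])
  rwa [Finset.card_image_of_injective _ π.injective, Fin.card_Iio] at this

theorem card_le_of_forall_lt_apply {n : ℕ} (π : Equiv.Perm (Fin n)) {S : Finset (Fin n)} {v : Fin n}
    (h : ∀ i ∈ S, v < π i) : S.card ≤ n - 1 - v := by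
  have := Finset.card_le_card (s := S.image π) (t := Finset.Ioi v) (by simpa [Finset.subset_iff])
  rwa [Finset.card_image_of_injective _ π.injective, Fin.card_Ioi] at this

theorem exists_perm_of_mapsTo_block {n : ℕ} (π : Equiv.Perm (Fin n)) {s t c : ℕ} (hs : s + c ≤ n)
    (hπ : ∀ i : Fin c, t ≤ (π ⟨s + i, by omega⟩ : ℕ) ∧ (π ⟨s + i, by omega⟩ : ℕ) < t + c) :
    ∃ σ : Equiv.Perm (Fin c), ∀ i : Fin c, (π ⟨s + i, by omega⟩ : ℕ) = t + σ i := by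
  let σ : Fin c → Fin c := fun i => ⟨π ⟨s + i, by omega⟩ - t, by have := hπ i; omega⟩
  have hσ : Function.Injective σ := fun i j hij => by
    have h1 := (hπ i).1; have h2 := (hπ j).1
    have hv : (π ⟨s + i, by omega⟩ : ℕ) = π ⟨s + j, by omega⟩ := by
      have := Fin.val_eq_of_eq hij; simp only [σ] at this; omega
    have := Fin.val_eq_of_eq (π.injective (Fin.ext hv))
    simp only [Nat.add_left_cancel_iff] at this
    exact Fin.ext this
  refine ⟨Equiv.ofBijective σ (Finite.injective_iff_bijective.1 hσ), fun i => ?_⟩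
  have := hπ i
  simp [σ]
  omega

theorem exists_eq_glue {n : ℕ} (π : Equiv.Perm (Fin (n + 1))) (hπ : pat132.Avoids π) :
    ∃ (a b : ℕ) (h : a + 1 + b = n + 1) (α : Equiv.Perm (Fin a)) (β : Equiv.Perm (Fin b)),
      π = glue h α β := by
  set q := π.symm (Fin.last n)
  have hq : π q = Fin.last n := by simp [q]
  have hlt_top : ∀ i, i ≠ q → π i < π q := fun i hi =>
    hq ▸ lt_of_le_of_ne (Fin.le_last _) (hq ▸ π.injective.ne hi)
  have hlayer : ∀ i l, i < q → q < l → π l < π i := fun i l hi hl =>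
    avoids132_apply_lt hπ hi hl (hlt_top l hl.ne')
  have hright : ∀ l : Fin (n + 1), q < l → (π l : ℕ) < n - q := by
    intro l hl
    have := card_le_of_forall_lt_apply π (S := Finset.Iic q) (v := π l) fun i hi => by
      rcases lt_or_eq_of_le (Finset.mem_Iic.1 hi) with hi | rfl
      exacts [hlayer i l hi hl, hlt_top l hl.ne']
    rw [Fin.card_Iic] at this
    omega
  have hleft : ∀ i : Fin (n + 1), i < q → n - q ≤ (π i : ℕ) := by
    intro i hi
    have := card_le_of_forall_apply_lt π (S := Finset.Ioi q) (v := π i) fun l hl =>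
      hlayer i l hi (Finset.mem_Ioi.1 hl)
    rwa [Fin.card_Ioi] at this
  obtain ⟨α, hα⟩ := exists_perm_of_mapsTo_block π (s := 0) (t := n - q) (c := q) (by omega)
    fun i => by
      have hi : (⟨0 + i, by omega⟩ : Fin (n + 1)) < q := Fin.lt_def.2 (by simp)
      have := hlt_top _ hi.ne
      rw [hq, Fin.lt_def, Fin.val_last] at this
      exact ⟨hleft _ hi, by omega⟩
  obtain ⟨β, hβ⟩ := exists_perm_of_mapsTo_block π (s := q + 1) (t := 0) (c := n - q) (by omega)
    fun i => ⟨Nat.zero_le _,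
      by simpa using hright _ (Fin.lt_def.2 (by show (q : ℕ) < q + 1 + i; omega))⟩
  refine ⟨q, n - q, by omega, α, β, Equiv.ext fun i => Fin.ext ?_⟩
  rcases lt_trichotomy (i : ℕ) q with hi | hi | hi
  · rw [glue_apply_of_lt _ hi, ← hα ⟨i, hi⟩]
    congr 2
    exact Fin.ext (by simp)
  · rw [glue_apply_of_eq _ hi, show i = q from Fin.ext hi, hq, Fin.val_last]
    omega
  · rw [glue_apply_of_gt _ hi, ← zero_add (β _ : ℕ), ← hβ]
    congr 2
    exact Fin.ext (by simp; omega)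

end Decomposition

section SplitCount

theorem add_one_add_of_mem_antidiagonal {m : ℕ} {x : ℕ × ℕ} (hx : x ∈ antidiagonal m) :
    x.1 + 1 + x.2 = m + 1 := by
  rw [HasAntidiagonal.mem_antidiagonal] at hx; omega

theorem card_avoids132_and (m : ℕ) (P : Equiv.Perm (Fin (m + 1)) → Prop) :
    Nat.card {π : Equiv.Perm (Fin (m + 1)) // pat132.Avoids π ∧ P π} =
      ∑ x : antidiagonal m, Nat.card {y : Equiv.Perm (Fin x.1.1) × Equiv.Perm (Fin x.1.2) //
        pat132.Avoids y.1 ∧ pat132.Avoids y.2 ∧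
          P (glue (add_one_add_of_mem_antidiagonal x.2) y.1 y.2)} := by
  rw [← Nat.card_sigma]
  refine (Nat.card_eq_of_bijective (fun z => ⟨glue _ z.2.1.1 z.2.1.2,
    (avoids132_glue_iff _).2 ⟨z.2.2.1, z.2.2.2.1⟩, z.2.2.2.2⟩) ⟨?_, ?_⟩).symm
  · rintro ⟨⟨⟨a, b⟩, hab⟩, ⟨α, β⟩, hy⟩ ⟨⟨⟨a', b'⟩, hab'⟩, ⟨α', β'⟩, hy'⟩ he
    have he : glue (add_one_add_of_mem_antidiagonal hab) α β =
        glue (add_one_add_of_mem_antidiagonal hab') α' β' := congrArg Subtype.val he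
    obtain rfl : a = a' := glue_left_size_eq he
    obtain rfl : b = b' := by rw [HasAntidiagonal.mem_antidiagonal] at hab hab'; omega
    obtain ⟨rfl, rfl⟩ := glue_inj he
    rfl
  · rintro ⟨π, hπ, hP⟩
    obtain ⟨a, b, h, α, β, rfl⟩ := exists_eq_glue π hπ
    obtain ⟨hα, hβ⟩ := (avoids132_glue_iff h).1 hπ
    exact ⟨⟨⟨(a, b), HasAntidiagonal.mem_antidiagonal.2 (by omega)⟩,
      ⟨(α, β), hα, hβ, hP⟩⟩, rfl⟩

theorem card_exists_and {ι X Y : Type*} [Fintype ι] [Finite X] [Finite Y]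
    (A : ι → X → Prop) (B : ι → Y → Prop) (huniq : ∀ x i j, A i x → A j x → i = j) :
    Nat.card {y : X × Y // ∃ i, A i y.1 ∧ B i y.2} =
      ∑ i, Nat.card {x // A i x} * Nat.card {y // B i y} := by
  simp_rw [← Nat.card_prod]
  rw [← Nat.card_sigma]
  refine (Nat.card_eq_of_bijective (fun z => ⟨(z.2.1.1, z.2.2.1), z.1, z.2.1.2, z.2.2.2⟩)
    ⟨?_, ?_⟩).symm
  · rintro ⟨i, ⟨x, hx⟩, ⟨y, hy⟩⟩ ⟨j, ⟨x', hx'⟩, ⟨y', hy'⟩⟩ he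
    simp only [Subtype.mk.injEq, Prod.mk.injEq] at he
    obtain ⟨rfl, rfl⟩ := he
    obtain rfl := huniq x i j hx hx'
    rfl
  · rintro ⟨⟨x, y⟩, i, hx, hy⟩
    exact ⟨⟨i, ⟨x, hx⟩, ⟨y, hy⟩⟩, rfl⟩

end SplitCount

/-! ### The canonical decomposition of `τ` -/

section Blocks

variable {k r : ℕ}

/-- `p` lists, from left to right, all right-to-left maxima `m₀, …, m_r` of the 1-3-2-avoiding
pattern `τ`, and every adjacency requirement of `τ` lies inside one of the blocks `τⁱ`. -/
structure IsBlockDecomposition (τ : GenPattern k) (p : Fin (r + 1) → Fin k) : Prop where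
  avoids132 : pat132.Avoids τ.perm
  strictMono : StrictMono p
  isRLMax : ∀ i, IsRLMax τ.perm (p i)
  exists_eq_of_isRLMax : ∀ i, IsRLMax τ.perm i → ∃ j, p j = i
  adj : ∀ j ∈ τ.adj, j + 1 < k ∧ ∀ i, (p i : ℕ) ≠ j ∧ (p i : ℕ) ≠ j + 1

/-- `Pref j` is the prefix `πʲ`: the block `τ⁰` for `j = 0`, everything up to `m_j` otherwise. -/
structure IsPrefixFamily (τ : GenPattern k) (p : Fin (r + 1) → Fin k)
    {prefLen : Fin (r + 1) → ℕ} (Pref : (j : Fin (r + 1)) → GenPattern (prefLen j)) : Prop where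
  len_zero : prefLen 0 = p 0
  len_succ : ∀ j : Fin r, prefLen j.succ = p j.succ + 1
  isReduction : ∀ j, IsReduction τ 0 (Pref j)

/-- `Suf j` is the suffix `σʲ`: everything from the block `τʲ` on. -/
structure IsSuffixFamily (τ : GenPattern k) (p : Fin (r + 1) → Fin k)
    {sufLen : Fin (r + 1) → ℕ} (Suf : (j : Fin (r + 1)) → GenPattern (sufLen j)) : Prop where
  len_zero : sufLen 0 = k
  len_succ : ∀ j : Fin r, sufLen j.succ = k - 1 - p j.castSucc
  isReduction : ∀ j, IsReduction τ (k - sufLen j) (Suf j)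

variable {τ : GenPattern k} {p : Fin (r + 1) → Fin k}

namespace IsBlockDecomposition

theorem perm_p_zero (hτ : IsBlockDecomposition τ p) : (τ.perm (p 0) : ℕ) = k - 1 := by
  have hk : 0 < k := (p 0).pos
  set z := τ.perm.symm ⟨k - 1, by omega⟩
  have hz : (τ.perm z : ℕ) = k - 1 := by simp [z]
  obtain ⟨i, hi⟩ := hτ.exists_eq_of_isRLMax z fun j hj => by
    have := Fin.val_ne_of_ne (τ.perm.injective.ne hj.ne')
    have := (τ.perm j).isLt
    rw [Fin.lt_def]; omega
  rw [← hi] at hz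
  rcases Fin.eq_zero_or_eq_succ i with rfl | ⟨i, rfl⟩
  · exact hz
  · have := Fin.lt_def.1 (hτ.isRLMax 0 (p i.succ) (hτ.strictMono (Fin.succ_pos i)))
    have := (τ.perm (p 0)).isLt
    omega

theorem p_last (hτ : IsBlockDecomposition τ p) : (p (Fin.last r) : ℕ) = k - 1 := by
  have hk : 0 < k := (p 0).pos
  obtain ⟨i, hi⟩ := hτ.exists_eq_of_isRLMax ⟨k - 1, by omega⟩ fun j hj => by
    have := j.isLt; rw [Fin.lt_def] at hj; simp at hj; omega
  have h1 := Fin.le_def.1 (hτ.strictMono.monotone (Fin.le_last i))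
  rw [hi, Fin.val_mk] at h1
  have := (p (Fin.last r)).isLt
  omega

theorem perm_lt_perm (hτ : IsBlockDecomposition τ p) {i : Fin (r + 1)} {x y : Fin k}
    (hx : x ≤ p i) (hy : p i < y) :
    τ.perm y < τ.perm x := by
  rcases eq_or_lt_of_le hx with rfl | hx
  · exact hτ.isRLMax i y hy
  · exact avoids132_apply_lt hτ.avoids132 hx hy (hτ.isRLMax i y hy)

theorem isReduction_self (hτ : IsBlockDecomposition τ p) : IsReduction τ 0 τ :=
  _root_.isReduction_self fun j hj => (hτ.adj j hj).1

end IsBlockDecomposition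

namespace IsPrefixFamily

variable {prefLen : Fin (r + 1) → ℕ} {Pref : (j : Fin (r + 1)) → GenPattern (prefLen j)}

theorem le_len (hP : IsPrefixFamily τ p Pref) (j : Fin (r + 1)) : (p j : ℕ) ≤ prefLen j := by
  rcases Fin.eq_zero_or_eq_succ j with rfl | ⟨j, rfl⟩
  · rw [hP.len_zero]
  · rw [hP.len_succ]; omega

theorem len_le (hP : IsPrefixFamily τ p Pref) (j : Fin (r + 1)) : prefLen j ≤ p j + 1 := by
  rcases Fin.eq_zero_or_eq_succ j with rfl | ⟨j, rfl⟩
  · rw [hP.len_zero]; omega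
  · rw [hP.len_succ]

theorem eq_p_zero (hP : IsPrefixFamily τ p Pref) {j : Fin (r + 1)} {c : Fin k}
    (h1 : prefLen j ≤ c) (h2 : c ≤ p j) : c = p 0 := by
  rcases Fin.eq_zero_or_eq_succ j with rfl | ⟨j, rfl⟩
  · exact le_antisymm h2 (Fin.le_def.2 (hP.len_zero ▸ h1))
  · rw [hP.len_succ] at h1
    exact absurd h2 (not_le.2 (Fin.lt_def.2 (by omega)))

theorem p_zero_add_one_lt_len (hP : IsPrefixFamily τ p Pref) (hp : StrictMono p)
    {j : Fin (r + 1)} (h : (p 0 : ℕ) < prefLen j) : (p 0 : ℕ) + 1 < prefLen j := by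
  rcases Fin.eq_zero_or_eq_succ j with rfl | ⟨j, rfl⟩
  · rw [hP.len_zero] at h; omega
  · rw [hP.len_succ]; have := Fin.lt_def.1 (hp (Fin.succ_pos j)); omega

theorem len_mono (hP : IsPrefixFamily τ p Pref) (hp : StrictMono p) {j j' : Fin (r + 1)}
    (h : j ≤ j') : prefLen j ≤ prefLen j' := by
  rcases eq_or_lt_of_le h with rfl | h
  · exact le_rfl
  · have := Fin.lt_def.1 (hp h); have := hP.len_le j; have := hP.le_len j'; omega

theorem contains_of_le (hP : IsPrefixFamily τ p Pref) (hp : StrictMono p) {j j' : Fin (r + 1)}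
    (h : j ≤ j') {n : ℕ} {γ : Equiv.Perm (Fin n)} (hγ : (Pref j').Contains γ) :
    (Pref j).Contains γ :=
  (hP.isReduction j').contains_of_contains (hP.isReduction j) le_rfl
    (by simpa using hP.len_mono hp h) hγ

end IsPrefixFamily

namespace IsSuffixFamily

variable {sufLen : Fin (r + 1) → ℕ} {Suf : (j : Fin (r + 1)) → GenPattern (sufLen j)}

theorem start_succ (hS : IsSuffixFamily τ p Suf) (j : Fin r) :
    k - sufLen j.succ = p j.castSucc + 1 := by
  rw [hS.len_succ]; have := (p j.castSucc).isLt; omega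

theorem start_mono (hS : IsSuffixFamily τ p Suf) (hp : StrictMono p) {j j' : Fin (r + 1)}
    (h : j ≤ j') : k - sufLen j ≤ k - sufLen j' := by
  rcases Fin.eq_zero_or_eq_succ j with rfl | ⟨i, rfl⟩
  · rw [hS.len_zero]; omega
  · obtain ⟨i', rfl⟩ := Fin.exists_succ_eq.2 (ne_of_gt (lt_of_lt_of_le (Fin.succ_pos i) h))
    rw [hS.start_succ, hS.start_succ]
    have := Fin.le_def.1 (hp.monotone (Fin.castSucc_le_castSucc_iff.2 (Fin.succ_le_succ_iff.1 h)))
    omega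

theorem contains_of_le (hS : IsSuffixFamily τ p Suf) (hp : StrictMono p) {j j' : Fin (r + 1)}
    (h : j ≤ j') {n : ℕ} {γ : Equiv.Perm (Fin n)} (hγ : (Suf j).Contains γ) :
    (Suf j').Contains γ := by
  have := (hS.isReduction j).add_le
  have := (hS.isReduction j').add_le
  exact (hS.isReduction j).contains_of_contains (hS.isReduction j') (hS.start_mono hp h)
    (by omega) hγ

end IsSuffixFamily

end Blocks

/-! ### Occurrences of `τ` in `glue h α β` -/

section Assemble

variable {k r a b n ℓ t : ℕ} {τ : GenPattern k} {p : Fin (r + 1) → Fin k}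
  {prefLen : Fin (r + 1) → ℕ} {Pref : (j : Fin (r + 1)) → GenPattern (prefLen j)}
  {α : Equiv.Perm (Fin a)} {β : Equiv.Perm (Fin b)}

def assembleOcc (h : a + 1 + b = n) (s : ℕ) (g : Fin ℓ → Fin a) (g' : Fin t → Fin b)
    (c : Fin k) : Fin n :=
  if h1 : (c : ℕ) < ℓ then Fin.castLE (by omega) (g ⟨c, h1⟩)
  else if h2 : s < c ∧ c - (s + 1) < t then ⟨a + 1 + g' ⟨c - (s + 1), h2.2⟩, by omega⟩
  else ⟨a, by omega⟩

variable (h : a + 1 + b = n) {s : ℕ} {g : Fin ℓ → Fin a} {g' : Fin t → Fin b}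

theorem assembleOcc_of_lt {c : Fin k} (hc : (c : ℕ) < ℓ) :
    assembleOcc h s g g' c = Fin.castLE (by omega) (g ⟨c, hc⟩) := by
  simp [assembleOcc, hc]

theorem assembleOcc_of_le_of_le {c : Fin k} (h1 : ℓ ≤ (c : ℕ)) (h2 : (c : ℕ) ≤ s) :
    assembleOcc h s g g' c = ⟨a, by omega⟩ := by
  simp [assembleOcc, h1.not_gt, h2.not_gt]

theorem assembleOcc_of_gt {c : Fin k} (hℓ : ℓ ≤ s + 1) (hc : s < (c : ℕ)) (hct : c < s + 1 + t) :
    assembleOcc h s g g' c = ⟨a + 1 + g' ⟨c - (s + 1), by omega⟩, by omega⟩ := by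
  simp [assembleOcc, hc, show ¬ (c : ℕ) < ℓ by omega, show (c : ℕ) - (s + 1) < t by omega]

theorem assembleOcc_le {c : Fin k} (hc : (c : ℕ) ≤ s) : (assembleOcc h s g g' c : ℕ) ≤ a := by
  unfold assembleOcc
  split_ifs with h1 h2
  · simp only [Fin.val_castLE]; exact (g _).isLt.le
  · omega
  · exact le_rfl

theorem lt_assembleOcc {c : Fin k} (hℓ : ℓ ≤ s + 1) (hc : s < (c : ℕ)) (hct : c < s + 1 + t) :
    a < (assembleOcc h s g g' c : ℕ) := by
  rw [assembleOcc_of_gt h hℓ hc hct]; simp only; omega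

theorem occOn_assembleOcc_left (hτ : IsBlockDecomposition τ p) (hP : IsPrefixFamily τ p Pref)
    {j : Fin (r + 1)} {g : Fin (prefLen j) → Fin a} (hg : (Pref j).Occ α g) (g' : Fin t → Fin b) :
    τ.OccOn (glue h α β) {c | (c : ℕ) ≤ p j} (assembleOcc h (p j) g g') := by
  have hlen := hP.len_le j
  have hL : τ.OccOn (glue h α β) {c | 0 ≤ (c : ℕ) ∧ (c : ℕ) < 0 + prefLen j}
      (assembleOcc h (p j) g g') := by
    refine (hP.isReduction j).occOn ?_
    convert hg.glue_left h (β := β) using 1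
    funext x
    rw [assembleOcc_of_lt h (by simp)]
    simp
  -- this set is `{m₀}` if `j = 0` and empty otherwise
  have hM : τ.OccOn (glue h α β) {c | prefLen j ≤ (c : ℕ) ∧ (c : ℕ) ≤ p j}
      (assembleOcc h (p j) g g') :=
    occOn_of_subsingleton fun c hc d hd =>
      (hP.eq_p_zero hc.1 hc.2).trans (hP.eq_p_zero hd.1 hd.2).symm
  convert hL.union hM (fun c hc d hd => Fin.lt_def.2 (by have := hc.2; have := hd.1; omega))
    (fun c hc d hd => ?_) (fun c hc d hd => ?_) (fun c hc d hd hA hdc => ?_) using 1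
  · ext c
    simp only [Set.mem_ofPred_eq, Set.mem_union, zero_le, true_and, zero_add]
    omega
  all_goals
    obtain rfl := hP.eq_p_zero hd.1 hd.2
    have hc' : (c : ℕ) < prefLen j := by simpa using hc.2
    rw [assembleOcc_of_lt h hc', assembleOcc_of_le_of_le h hd.1 hd.2]
  · exact Fin.lt_def.2 (by simp)
  · have hne : c ≠ p 0 := Fin.ne_of_lt (Fin.lt_def.2 (by have := hd.1; omega))
    refine iff_of_true ?_ ?_ <;> rw [Fin.lt_def]
    · rw [glue_apply_of_lt h (by simp), glue_apply_of_eq h rfl]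
      simp only [Fin.val_castLE, Fin.eta]
      have := (α (g ⟨c, hc'⟩)).isLt
      omega
    · have h1 := Fin.val_ne_of_ne (τ.perm.injective.ne hne)
      have := (τ.perm c).isLt
      rw [hτ.perm_p_zero] at h1 ⊢
      omega
  · exact absurd hdc ((hτ.adj c hA).2 0).2

theorem occOn_assembleOcc_right {ρ : GenPattern t} (hρ : IsReduction τ (s + 1) ρ) (hℓ : ℓ ≤ s + 1)
    {g' : Fin t → Fin b} (hg' : ρ.Occ β g') (g : Fin ℓ → Fin a) :
    τ.OccOn (glue h α β) {c | s + 1 ≤ (c : ℕ) ∧ (c : ℕ) < s + 1 + t} (assembleOcc h s g g') := by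
  refine hρ.occOn ?_
  convert hg'.glue_right h (α := α) using 1
  funext x
  rw [assembleOcc_of_gt h hℓ (by simp; omega) (by simp)]
  simp

theorem contains_glue_of_split (hτ : IsBlockDecomposition τ p) (hP : IsPrefixFamily τ p Pref)
    (j : Fin (r + 1)) {ρ : GenPattern t} (hρ : IsReduction τ (p j + 1) ρ) (ht : p j + 1 + t = k)
    (hα : (Pref j).Contains α) (hβ : ρ.Contains β) : τ.Contains (glue h α β) := by
  obtain ⟨g, hg⟩ := hα
  obtain ⟨g', hg'⟩ := hβ
  have hℓ := hP.len_le j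
  refine ⟨assembleOcc h (p j) g g', OccOn.occ ?_⟩
  convert (occOn_assembleOcc_left h hτ hP hg g').union (occOn_assembleOcc_right h hρ hℓ hg' g)
    (fun c hc d hd => Fin.lt_def.2 (by have : (c : ℕ) ≤ p j := hc; have := hd.1; omega))
    (fun c hc d hd => Fin.lt_def.2 (lt_of_le_of_lt (assembleOcc_le h hc)
      (lt_assembleOcc h hℓ (by have := hd.1; omega) hd.2)))
    (fun c hc d hd => iff_of_false
      (glue_apply_lt_glue_apply h (assembleOcc_le h hc)
        (lt_assembleOcc h hℓ (by have := hd.1; omega) hd.2)).not_gt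
      (hτ.perm_lt_perm (Fin.le_def.2 hc) (Fin.lt_def.2 (by have := hd.1; omega))).not_gt)
    (fun c hc d hd hA hdc => absurd
      (show (c : ℕ) = p j by have : (c : ℕ) ≤ p j := hc; have := hd.1; omega)
      ((hτ.adj c hA).2 j).1.symm) using 1
  ext c
  simp only [Set.mem_ofPred_eq, Set.mem_union, Set.mem_univ, true_iff]
  have := c.isLt
  omega

end Assemble

section ContainsGlue

variable {k r a b n : ℕ} {τ : GenPattern k} {p : Fin (r + 1) → Fin k}
  {prefLen sufLen : Fin (r + 1) → ℕ} {Pref : (j : Fin (r + 1)) → GenPattern (prefLen j)}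
  {Suf : (j : Fin (r + 1)) → GenPattern (sufLen j)}
  {α : Equiv.Perm (Fin a)} {β : Equiv.Perm (Fin b)} {f : Fin k → Fin n}

theorem GenPattern.Occ.contains_pref (hτ : IsBlockDecomposition τ p) (hP : IsPrefixFamily τ p Pref)
    (h : a + 1 + b = n) (hf : τ.Occ (glue h α β) f) (j : Fin (r + 1))
    (hj : ∀ c : Fin k, (c : ℕ) < prefLen j → (f c : ℕ) ≤ a) : (Pref j).Contains α := by
  have hlen := (hP.isReduction j).add_le
  refine ((hP.isReduction j).occ_restrict hf).contains_left h fun x => ?_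
  refine lt_of_le_of_ne (hj _ (by simp)) fun hx => ?_
  -- only the maximum `m₀` of `τ` can be sent to the maximum of `glue h α β`
  have hc : (⟨0 + x, by omega⟩ : Fin k) = p 0 := τ.perm.injective <| Fin.ext <| by
    rw [hτ.perm_p_zero, hf.perm_eq_max_of_apply_eq_max (by rw [glue_apply_of_eq h hx]; omega)]
  have hx0 : (p 0 : ℕ) < prefLen j := by rw [← hc]; simp
  have hnext := hP.p_zero_add_one_lt_len hτ.strictMono hx0
  have := hj ⟨p 0 + 1, by omega⟩ hnext
  have := Fin.lt_def.1 (hf.1 (show p 0 < ⟨p 0 + 1, by omega⟩ from Fin.lt_def.2 (by simp)))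
  have : (f (p 0) : ℕ) = a := hc ▸ hx
  omega

theorem GenPattern.Occ.contains_suf (hS : IsSuffixFamily τ p Suf) (h : a + 1 + b = n)
    (hf : τ.Occ (glue h α β) f) (j : Fin (r + 1))
    (hj : ∀ c : Fin k, k - sufLen j ≤ (c : ℕ) → a < (f c : ℕ)) : (Suf j).Contains β :=
  ((hS.isReduction j).occ_restrict hf).contains_right h fun _ => hj _ (by simp)

theorem isRLMax_of_occ_glue (h : a + 1 + b = n) (hf : τ.Occ (glue h α β) f) {s : Fin k}
    (hs : (f s : ℕ) ≤ a) (hgt : ∀ y, s < y → a < (f y : ℕ)) : IsRLMax τ.perm s :=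
  fun y hy => (hf.2.1 y s).1 (glue_apply_lt_glue_apply h hs (hgt y hy))

theorem GenPattern.Occ.contains_pref_or_contains_suf (hτ : IsBlockDecomposition τ p)
    (hP : IsPrefixFamily τ p Pref) (hS : IsSuffixFamily τ p Suf) (h : a + 1 + b = n)
    (hf : τ.Occ (glue h α β) f) :
    (Pref (Fin.last r)).Contains α ∨ (Suf 0).Contains β ∨
      ∃ j : Fin r, (Pref j.castSucc).Contains α ∧ (Suf j.succ).Contains β := by
  classical
  by_cases hL : ∃ c, (f c : ℕ) ≤ a
  · -- the last position sent weakly left of the maximum is a right-to-left maximum `m_j`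
    set S := Finset.univ.filter fun c => (f c : ℕ) ≤ a
    have hS_ne : S.Nonempty := hL.elim fun c hc => ⟨c, by simpa [S] using hc⟩
    have hmem : ∀ c, (f c : ℕ) ≤ a ↔ c ≤ S.max' hS_ne := fun c =>
      ⟨fun hc => S.le_max' c (by simpa [S] using hc), fun hc => le_trans
        (Fin.le_def.1 (hf.1.monotone hc)) (by simpa [S] using S.max'_mem hS_ne)⟩
    obtain ⟨j, hj⟩ := hτ.exists_eq_of_isRLMax _ <| isRLMax_of_occ_glue h hf
      ((hmem _).2 le_rfl) fun y hy => not_le.1 fun h' => hy.not_ge ((hmem y).1 h')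
    have hpref : ∀ c : Fin k, (c : ℕ) < prefLen j → (f c : ℕ) ≤ a := fun c hc =>
      (hmem c).2 (hj ▸ Fin.le_def.2 (by have := hP.len_le j; omega))
    rcases Fin.eq_castSucc_or_eq_last j with ⟨j, rfl⟩ | rfl
    · refine Or.inr (Or.inr ⟨j, hf.contains_pref hτ hP h _ hpref, hf.contains_suf hS h _ ?_⟩)
      intro c hc
      rw [hS.start_succ] at hc
      exact not_le.1 fun h' => absurd ((hmem c).1 h') (by rw [← hj]; exact not_le.2 hc)
    · exact Or.inl (hf.contains_pref hτ hP h _ hpref)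
  · push Not at hL
    exact Or.inr (Or.inl (hf.contains_suf hS h 0 fun c _ => hL c))

theorem contains_glue_iff (hτ : IsBlockDecomposition τ p) (hP : IsPrefixFamily τ p Pref)
    (hS : IsSuffixFamily τ p Suf) (h : a + 1 + b = n) :
    τ.Contains (glue h α β) ↔ (Pref (Fin.last r)).Contains α ∨ (Suf 0).Contains β ∨
      ∃ j : Fin r, (Pref j.castSucc).Contains α ∧ (Suf j.succ).Contains β := by
  refine ⟨fun ⟨_, hf⟩ => hf.contains_pref_or_contains_suf hτ hP hS h, ?_⟩
  rintro (hα | hβ | ⟨j, hα, hβ⟩)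
  · have := hτ.p_last
    exact contains_glue_of_split h hτ hP (Fin.last r)
      (isReduction_of_len_zero τ (by omega) ⟨1, ∅⟩ rfl) (by omega) hα (contains_of_len_zero _ β)
  · have := hS.len_zero
    exact Contains.glue_right h ((hS.isReduction 0).contains_of_contains hτ.isReduction_self
      (by omega) (by omega) hβ)
  · have hρ := hS.isReduction j.succ
    rw [hS.start_succ] at hρ
    refine contains_glue_of_split h hτ hP j.castSucc hρ ?_ hα hβ
    rw [hS.len_succ]
    have := (p j.castSucc).isLt
    omega

end ContainsGlue

/-! ### Counting -/

section FirstAvoided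

variable {k r n : ℕ} {prefLen : Fin (r + 1) → ℕ}
  {Pref : (j : Fin (r + 1)) → GenPattern (prefLen j)}

def IsFirstAvoided (Pref : (j : Fin (r + 1)) → GenPattern (prefLen j)) (j : Fin (r + 1))
    (γ : Equiv.Perm (Fin n)) : Prop :=
  (Pref j).Avoids γ ∧ ∀ i < j, (Pref i).Contains γ

theorem IsFirstAvoided.unique {γ : Equiv.Perm (Fin n)} {j j' : Fin (r + 1)}
    (h : IsFirstAvoided Pref j γ) (h' : IsFirstAvoided Pref j' γ) : j = j' := by
  rcases lt_trichotomy j j' with hlt | heq | hgt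
  exacts [absurd (h'.2 j hlt) h.1, heq, absurd (h.2 j' hgt) h'.1]

theorem exists_isFirstAvoided {γ : Equiv.Perm (Fin n)} {j : Fin (r + 1)}
    (h : (Pref j).Avoids γ) : ∃ j', IsFirstAvoided Pref j' γ := by
  obtain ⟨j', hj', hmin⟩ := wellFounded_lt.has_min {i | (Pref i).Avoids γ} ⟨j, h⟩
  exact ⟨j', hj', fun i hi => by_contra fun hc => hmin i hc hi⟩

variable {τ : GenPattern k} {p : Fin (r + 1) → Fin k} {sufLen : Fin (r + 1) → ℕ}
  {Suf : (j : Fin (r + 1)) → GenPattern (sufLen j)}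

theorem avoids_glue_iff (hτ : IsBlockDecomposition τ p) (hP : IsPrefixFamily τ p Pref)
    (hS : IsSuffixFamily τ p Suf) {a b : ℕ} (h : a + 1 + b = n) {α : Equiv.Perm (Fin a)}
    {β : Equiv.Perm (Fin b)} :
    τ.Avoids (glue h α β) ↔ ∃ j, IsFirstAvoided Pref j α ∧ (Suf j).Avoids β := by
  have key := contains_glue_iff hτ hP hS h (α := α) (β := β)
  constructor
  · intro hav
    obtain ⟨j, hj⟩ := exists_isFirstAvoided fun hc => hav (key.2 (Or.inl hc))
    refine ⟨j, hj, fun hc => hav (key.2 ?_)⟩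
    rcases Fin.eq_zero_or_eq_succ j with rfl | ⟨i, rfl⟩
    · exact Or.inr (Or.inl hc)
    · exact Or.inr (Or.inr ⟨i, hj.2 _ Fin.castSucc_lt_succ, hc⟩)
  · rintro ⟨j, hj, hβ⟩ hc
    rcases key.1 hc with hα | hβ' | ⟨i, hα, hβ'⟩
    · exact hj.1 (hP.contains_of_le hτ.strictMono (Fin.le_last j) hα)
    · exact hβ (hS.contains_of_le hτ.strictMono (Fin.zero_le j) hβ')
    · rcases le_or_gt j i.castSucc with hji | hij
      · exact hj.1 (hP.contains_of_le hτ.strictMono hji hα)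
      · exact hβ (hS.contains_of_le hτ.strictMono (Fin.castSucc_lt_iff_succ_le.1 hij) hβ')

theorem card_avoids_succ (hτ : IsBlockDecomposition τ p) (hP : IsPrefixFamily τ p Pref)
    (hS : IsSuffixFamily τ p Suf) (m : ℕ) :
    Nat.card {π : Equiv.Perm (Fin (m + 1)) // pat132.Avoids π ∧ τ.Avoids π} =
      ∑ j, ∑ x ∈ antidiagonal m,
        Nat.card {α : Equiv.Perm (Fin x.1) // pat132.Avoids α ∧ IsFirstAvoided Pref j α} *
        Nat.card {β : Equiv.Perm (Fin x.2) // pat132.Avoids β ∧ (Suf j).Avoids β} := by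
  rw [card_avoids132_and, Finset.sum_comm, ← Finset.sum_coe_sort (antidiagonal m)]
  refine Finset.sum_congr rfl fun x _ => ?_
  rw [← card_exists_and _ _ fun γ i j hi hj => hi.2.unique hj.2]
  refine Nat.card_congr (Equiv.subtypeEquivRight fun y => ?_)
  rw [avoids_glue_iff hτ hP hS]
  exact ⟨fun ⟨h1, h2, j, hj, hs⟩ => ⟨j, ⟨h1, hj⟩, h2, hs⟩,
    fun ⟨j, ⟨h1, hj⟩, h2, hs⟩ => ⟨h1, h2, j, hj, hs⟩⟩

end FirstAvoided

section GeneratingFunction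

theorem card_and_add_card_and_not {X : Type*} [Finite X] (P R : X → Prop) :
    Nat.card {x // P x ∧ R x} + Nat.card {x // P x ∧ ¬ R x} = Nat.card {x // P x} := by
  classical
  have := Fintype.ofFinite X
  simp only [Nat.card_eq_fintype_card, Fintype.card_subtype]
  rw [← Finset.filter_filter, ← Finset.filter_filter, Finset.card_filter_add_card_filter_not]

variable {k r : ℕ} {τ : GenPattern k} {p : Fin (r + 1) → Fin k} {prefLen : Fin (r + 1) → ℕ}
  {Pref : (j : Fin (r + 1)) → GenPattern (prefLen j)}

theorem coeff_fgen_zero (n : ℕ) :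
    coeff n (Fgen (Pref 0)) =
      Nat.card {γ : Equiv.Perm (Fin n) // pat132.Avoids γ ∧ IsFirstAvoided Pref 0 γ} := by
  rw [Fgen, coeff_mk]
  exact congrArg _ (Nat.card_congr (Equiv.subtypeEquivRight fun γ => and_congr_right fun _ =>
    ⟨fun h => ⟨h, fun i hi => absurd hi (Fin.not_lt_zero i)⟩, fun h => h.1⟩))

theorem coeff_fgen_succ_sub (hP : IsPrefixFamily τ p Pref) (hp : StrictMono p) (i : Fin r)
    (n : ℕ) :
    coeff n (Fgen (Pref i.succ)) - coeff n (Fgen (Pref i.castSucc)) =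
      Nat.card {γ : Equiv.Perm (Fin n) // pat132.Avoids γ ∧ IsFirstAvoided Pref i.succ γ} := by
  simp only [Fgen, coeff_mk]
  rw [sub_eq_iff_eq_add, ← Nat.cast_add, ← card_and_add_card_and_not
    (fun γ => pat132.Avoids γ ∧ (Pref i.succ).Avoids γ) (fun γ => (Pref i.castSucc).Contains γ)]
  congr 2 <;> refine Nat.card_congr (Equiv.subtypeEquivRight fun γ => ?_)
  · refine and_assoc.trans (and_congr_right fun _ => and_congr_right fun _ => ?_)
    exact ⟨fun hc i' hi' => hP.contains_of_le hp (Fin.le_castSucc_iff.2 hi') hc,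
      fun h => h _ Fin.castSucc_lt_succ⟩
  · exact ⟨fun ⟨⟨h1, _⟩, h2⟩ => ⟨h1, h2⟩, fun ⟨h1, h2⟩ =>
      ⟨⟨h1, fun hc => h2 (hP.contains_of_le hp Fin.castSucc_lt_succ.le hc)⟩, h2⟩⟩

theorem card_avoids_zero {k : ℕ} (τ : GenPattern k) (hk : 0 < k) :
    Nat.card {π : Equiv.Perm (Fin 0) // pat132.Avoids π ∧ τ.Avoids π} = 1 := by
  rw [Nat.card_congr (Equiv.subtypeUnivEquiv fun π =>
    ⟨fun ⟨f, _⟩ => (f 0).elim0, fun ⟨f, _⟩ => (f ⟨0, hk⟩).elim0⟩)]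
  simp

end GeneratingFunction

/-- Theorem 1 (gencase): for a 1-3-2-avoiding generalized pattern `τ = ⟨φ, A⟩`
with right-to-left maxima of `φ` at positions `p 0 < p 1 < ⋯ < p r` and
adjacencies only inside the blocks between the maxima,
`F_τ = 1 + x·∑_{j=0}^r (F_{π^j} − F_{π^{j−1}})·F_{σ^j}`. -/
theorem statement0 (k r : ℕ) (φ : Equiv.Perm (Fin k)) (A : Set ℕ)
    (hφ : pat132.Avoids φ)
    (p : Fin (r + 1) → Fin k) (hp : StrictMono p)
    (hmax : ∀ i, IsRLMax φ (p i))
    (hall : ∀ i : Fin k, IsRLMax φ i → ∃ j, p j = i)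
    (hA : ∀ j ∈ A, j + 1 < k ∧ ∀ i : Fin (r + 1), (p i : ℕ) ≠ j ∧ (p i : ℕ) ≠ j + 1)
    (prefLen sufLen : Fin (r + 1) → ℕ)
    (hpl0 : prefLen 0 = (p 0 : ℕ))
    (hpl : ∀ j : Fin (r + 1), 1 ≤ (j : ℕ) → prefLen j = (p j : ℕ) + 1)
    (hsl0 : sufLen 0 = k)
    (hsl : ∀ j : Fin (r + 1), 1 ≤ (j : ℕ) → sufLen j =
      k - 1 - (p ⟨(j : ℕ) - 1, Nat.lt_of_le_of_lt (Nat.sub_le _ _) j.isLt⟩ : ℕ))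
    (Pref : (j : Fin (r + 1)) → GenPattern (prefLen j))
    (Suf : (j : Fin (r + 1)) → GenPattern (sufLen j))
    (hPref : ∀ j, IsReduction ⟨φ, A⟩ 0 (Pref j))
    (hSuf : ∀ j, IsReduction ⟨φ, A⟩ (k - sufLen j) (Suf j))
    (prevF : Fin (r + 1) → PowerSeries ℚ)
    (hprev0 : prevF 0 = 0)
    (hprev : ∀ j : Fin (r + 1), 1 ≤ (j : ℕ) → prevF j =
      Fgen (Pref ⟨(j : ℕ) - 1, Nat.lt_of_le_of_lt (Nat.sub_le _ _) j.isLt⟩)) :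
    Fgen ⟨φ, A⟩ = 1 + PowerSeries.X *
      ∑ j : Fin (r + 1), (Fgen (Pref j) - prevF j) * Fgen (Suf j) := by
  have hτ : IsBlockDecomposition (⟨φ, A⟩ : GenPattern k) p := ⟨hφ, hp, hmax, hall, hA⟩
  have hP : IsPrefixFamily (⟨φ, A⟩ : GenPattern k) p Pref :=
    ⟨hpl0, fun j => hpl j.succ (by simp), hPref⟩
  have hS : IsSuffixFamily (⟨φ, A⟩ : GenPattern k) p Suf :=
    ⟨hsl0, fun j => hsl j.succ (by simp), hSuf⟩
  have hfirst : ∀ j n, coeff n (Fgen (Pref j) - prevF j) =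
      Nat.card {γ : Equiv.Perm (Fin n) // pat132.Avoids γ ∧ IsFirstAvoided Pref j γ} := by
    intro j n
    rcases Fin.eq_zero_or_eq_succ j with rfl | ⟨i, rfl⟩
    · rw [hprev0, sub_zero, coeff_fgen_zero]
    · rw [hprev _ (by simp), map_sub, ← coeff_fgen_succ_sub hP hp i]
      rfl
  ext (_ | m)
  · simp [Fgen, card_avoids_zero _ (p 0).pos]
  · rw [map_add, coeff_one, if_neg m.succ_ne_zero, zero_add, coeff_succ_X_mul, Fgen, coeff_mk,
      card_avoids_succ hτ hP hS m, map_sum]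
    push_cast
    refine Finset.sum_congr rfl fun j _ => ?_
    rw [coeff_mul]
    refine Finset.sum_congr rfl fun x _ => ?_
    rw [hfirst, Fgen, coeff_mk]
end

section
/- Let τ be any of the four generalized patterns 12, 1-2, 21, 2-1. For every k≥2, the generating function for permutations avoiding 1-3-2 and τ-3-4-⋯-k (the pattern of length k obtained by appending the letters 3,4,…,k, each separated by dashes) satisfies F_{τ-3-4-⋯-k}(x) = R_k(x) = V_{k−1}(x)/V_k(x); equivalently, V_k(x)·F_{τ-3-4-⋯-k}(x) = V_{k−1}(x) as formal power series. -/
open Finset PowerSeries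

/-!
A 132-avoiding permutation with its maximum at position `a` is `α n β`, where every letter of `α`
exceeds every letter of `β` and `α`, `β` are arbitrary 132-avoiders. The last letter of
`τ' = τ-(ℓ+1)` is its largest, so an occurrence of `τ'` in `α n β` either lies inside `β`, or ends
in `α n` and then its first `ℓ` letters are an occurrence of `τ` in `α`; conversely an occurrence
of `τ` in `α` extends by `n`. Hence `F_{τ'} = 1 + x F_τ F_{τ'}`. For a pattern of length two the
only avoider of each length is monotone, so `F = 1/(1 - x)`, and the recurrence
`V_{ℓ+2} = V_{ℓ+1} - x V_ℓ` turns `V_{ℓ+1} F_τ = V_ℓ` into `V_{ℓ+2} F_{τ'} = V_{ℓ+1}`.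
-/

open Equiv

def IsPatternAt {a n : ℕ} (π : Perm (Fin n)) (s : ℕ) (α : Perm (Fin a)) : Prop :=
  ∀ (i j : Fin a) (hi : s + i < n) (hj : s + j < n), π ⟨s + i, hi⟩ < π ⟨s + j, hj⟩ ↔ α i < α j

namespace GenPattern

/-- `τ'` is the paper's `τ-(ℓ+1)`. -/
def IsDashMaxExtension {ℓ : ℕ} (τ : GenPattern ℓ) (τ' : GenPattern (ℓ + 1)) : Prop :=
  (∀ i : Fin ℓ, τ'.perm i.castSucc = (τ.perm i).castSucc) ∧
  ∀ j, j + 1 < ℓ + 1 → (j ∈ τ'.adj ↔ j ∈ τ.adj ∧ j + 1 < ℓ)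

section Occurrences
variable {k a n s : ℕ} {π : Perm (Fin n)}

theorem Occ.shift {p : GenPattern k} {α : Perm (Fin a)} (hs : s + a ≤ n)
    (hπα : IsPatternAt π s α) {g : Fin k → Fin a} (hg : p.Occ α g) :
    p.Occ π fun x => ⟨s + g x, by have := (g x).isLt; omega⟩ := by
  obtain ⟨hmono, hiso, hadj⟩ := hg
  refine ⟨fun x y hxy => ?_, fun x y => (hπα _ _ _ _).trans (hiso x y), fun j hj hjk => ?_⟩
  · exact Fin.mk_lt_mk.2 (Nat.add_lt_add_left (hmono hxy) s)
  · have := hadj j hj hjk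
    dsimp only
    omega

theorem Occ.restrict {p : GenPattern k} {α : Perm (Fin a)} (hπα : IsPatternAt π s α)
    {f : Fin k → Fin n} (hf : p.Occ π f) (hin : ∀ x, s ≤ f x ∧ (f x : ℕ) < s + a) :
    p.Occ α fun x => ⟨f x - s, by have := hin x; omega⟩ := by
  obtain ⟨hmono, hiso, hadj⟩ := hf
  have hf_eq : ∀ x, (⟨s + (f x - s), by have := hin x; omega⟩ : Fin n) = f x :=
    fun x => Fin.ext (by have := hin x; dsimp only; omega)
  refine ⟨fun x y hxy => ?_, fun x y => ?_, fun j hj hjk => ?_⟩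
  · have := Fin.lt_def.1 (hmono hxy)
    exact Fin.mk_lt_mk.2 (by have := hin x; omega)
  · have h := hπα ⟨f x - s, by have := hin x; omega⟩ ⟨f y - s, by have := hin y; omega⟩
      (by have := hin x; dsimp only; omega) (by have := hin y; dsimp only; omega)
    simp only [hf_eq] at h
    rw [← h, hiso]
  · have := hadj j hj hjk
    have := hin ⟨j, by omega⟩
    dsimp only
    omega

variable {ℓ : ℕ} {τ : GenPattern ℓ} {τ' : GenPattern (ℓ + 1)}

theorem IsDashMaxExtension.perm_last (hτ : τ.IsDashMaxExtension τ') :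
    τ'.perm (Fin.last ℓ) = Fin.last ℓ := by
  rcases Fin.eq_castSucc_or_eq_last (τ'.perm (Fin.last ℓ)) with ⟨i, hi⟩ | h
  · rw [← τ.perm.apply_symm_apply i, ← hτ.1] at hi
    exact absurd (τ'.perm.injective hi) (Fin.castSucc_ne_last _).symm
  · exact h

theorem IsDashMaxExtension.perm_castSucc_lt_perm_castSucc (hτ : τ.IsDashMaxExtension τ')
    (i j : Fin ℓ) : τ'.perm i.castSucc < τ'.perm j.castSucc ↔ τ.perm i < τ.perm j := by
  simp [hτ.1]

theorem IsDashMaxExtension.perm_castSucc_lt_perm_last (hτ : τ.IsDashMaxExtension τ')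
    (i : Fin ℓ) : τ'.perm i.castSucc < τ'.perm (Fin.last ℓ) := by
  simp [hτ.1, hτ.perm_last]

theorem Occ.castSucc (hτ : τ.IsDashMaxExtension τ') {f : Fin (ℓ + 1) → Fin n}
    (hf : τ'.Occ π f) : τ.Occ π (f ∘ Fin.castSucc) := by
  obtain ⟨hmono, hiso, hadj⟩ := hf
  refine ⟨hmono.comp Fin.strictMono_castSucc, fun x y => ?_, fun j hj hjk => ?_⟩
  · rw [Function.comp_apply, Function.comp_apply, hiso, hτ.perm_castSucc_lt_perm_castSucc]
  · exact hadj j ((hτ.2 j (by omega)).2 ⟨hj, hjk⟩) (by omega)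

theorem Occ.snoc (hτ : τ.IsDashMaxExtension τ') {g : Fin ℓ → Fin n} (hg : τ.Occ π g)
    {q : Fin n} (hq : ∀ i, g i < q ∧ π (g i) < π q) :
    τ'.Occ π (Fin.snoc (α := fun _ => Fin n) g q) := by
  obtain ⟨hmono, hiso, hadj⟩ := hg
  refine ⟨fun x y hxy => ?_, fun x y => ?_, fun j hj hjk => ?_⟩
  · induction y using Fin.lastCases with
    | last =>
      induction x using Fin.lastCases with
      | last => exact absurd hxy (lt_irrefl _)
      | cast i => simpa using (hq i).1
    | cast j =>
      induction x using Fin.lastCases with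
      | last => exact absurd hxy (Fin.castSucc_lt_last j).not_gt
      | cast i => simpa using hmono (Fin.castSucc_lt_castSucc_iff.1 hxy)
  · induction y using Fin.lastCases with
    | last =>
      induction x using Fin.lastCases with
      | last => simp
      | cast i => simpa using iff_of_true (hq i).2 (hτ.perm_castSucc_lt_perm_last i)
    | cast j =>
      induction x using Fin.lastCases with
      | last =>
        simpa using iff_of_false (hq j).2.not_gt (hτ.perm_castSucc_lt_perm_last j).not_gt
      | cast i => simpa [hτ.perm_castSucc_lt_perm_castSucc] using hiso i j
  · obtain ⟨hj', hjℓ⟩ := (hτ.2 j hjk).1 hj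
    have hsnoc : ∀ (i : ℕ) (hi : i < ℓ),
        Fin.snoc (α := fun _ => Fin n) g q ⟨i, by omega⟩ = g ⟨i, hi⟩ :=
      fun i hi => Fin.snoc_castSucc (α := fun _ => Fin n) q g ⟨i, hi⟩
    rw [hsnoc, hsnoc]
    exact hadj j hj' hjℓ

end Occurrences

end GenPattern

section Join
variable {a b n : ℕ}

def joinFun (h : a + b = n) (α : Perm (Fin a)) (β : Perm (Fin b)) (i : Fin (n + 1)) :
    Fin (n + 1) :=
  if hi : (i : ℕ) < a then ⟨b + α ⟨i, hi⟩, by have := (α ⟨i, hi⟩).isLt; omega⟩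
  else if hia : (i : ℕ) = a then Fin.last n
  else
    have hi' : (i : ℕ) - (a + 1) < b := by have := i.isLt; omega
    ⟨β ⟨i - (a + 1), hi'⟩, by have := (β ⟨i - (a + 1), hi'⟩).isLt; omega⟩

variable (h : a + b = n) (α : Perm (Fin a)) (β : Perm (Fin b)) {i : Fin (n + 1)}

theorem joinFun_of_lt (hi : (i : ℕ) < a) : (joinFun h α β i : ℕ) = b + α ⟨i, hi⟩ := by
  simp [joinFun, hi]

theorem joinFun_of_eq (hi : (i : ℕ) = a) : joinFun h α β i = Fin.last n := by
  simp [joinFun, hi]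

theorem joinFun_of_gt (hi : a < (i : ℕ)) :
    (joinFun h α β i : ℕ) = β ⟨i - (a + 1), by have := i.isLt; omega⟩ := by
  simp [joinFun, hi.not_gt, hi.ne']

theorem joinFun_injective : Function.Injective (joinFun h α β) := by
  intro x y hxy
  rw [Fin.ext_iff] at hxy ⊢
  rcases lt_trichotomy (x : ℕ) a with hxa | hxa | hxa <;>
    rcases lt_trichotomy (y : ℕ) a with hya | hya | hya <;>
    simp only [joinFun_of_lt, joinFun_of_eq, joinFun_of_gt, Fin.val_last, *] at hxy
  all_goals first
    | omega
    | (simp only [add_right_inj, Fin.val_inj, EmbeddingLike.apply_eq_iff_eq, Fin.mk.injEq] at hxy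
       omega)

/-- `α n β`, with the letters of `α` raised above those of `β`. -/
noncomputable def join : Perm (Fin (n + 1)) :=
  Equiv.ofBijective (joinFun h α β) (Finite.injective_iff_bijective.1 (joinFun_injective h α β))

theorem join_apply : join h α β i = joinFun h α β i := rfl

theorem join_eq_last (hi : (i : ℕ) = a) : join h α β i = Fin.last n :=
  joinFun_of_eq h α β hi

theorem join_lt_last (hi : (i : ℕ) ≠ a) : join h α β i < Fin.last n := by
  refine (Fin.le_last _).lt_of_ne fun he => hi ?_
  rw [← join_eq_last h α β (i := ⟨a, by omega⟩) rfl] at he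
  simpa using congrArg Fin.val ((join h α β).injective he)

theorem join_lt_join {j : Fin (n + 1)} (hi : (i : ℕ) ≤ a) (hj : a < (j : ℕ)) :
    join h α β j < join h α β i := by
  rw [Fin.lt_def]
  rcases hi.lt_or_eq with hi | hi
  · have := joinFun_of_lt h α β hi
    have := joinFun_of_gt h α β hj
    simp only [join, ofBijective_apply]
    omega
  · rw [join_eq_last h α β hi]
    have := joinFun_of_gt h α β hj
    simp only [join, ofBijective_apply, Fin.val_last]
    omega

theorem isPatternAt_join_left : IsPatternAt (join h α β) 0 α := by
  intro x y hx hy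
  rw [join_apply, join_apply, Fin.lt_def, Fin.lt_def, joinFun_of_lt h α β (by simp),
    joinFun_of_lt h α β (by simp)]
  simp

theorem isPatternAt_join_right : IsPatternAt (join h α β) (a + 1) β := by
  intro x y hx hy
  rw [join_apply, join_apply, Fin.lt_def, Fin.lt_def, joinFun_of_gt h α β (by dsimp only; omega),
    joinFun_of_gt h α β (by dsimp only; omega)]
  simp

theorem join_injective {α' : Perm (Fin a)} {β' : Perm (Fin b)}
    (hj : join h α β = join h α' β') : α = α' ∧ β = β' := by
  refine ⟨Equiv.ext fun t => Fin.ext ?_, Equiv.ext fun t => Fin.ext ?_⟩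
  · have := congrArg Fin.val (Equiv.ext_iff.1 hj ⟨t, by omega⟩)
    rwa [join_apply, join_apply, joinFun_of_lt h α β t.isLt, joinFun_of_lt h α' β' t.isLt,
      add_right_inj] at this
  · have := congrArg Fin.val (Equiv.ext_iff.1 hj ⟨a + 1 + t, by omega⟩)
    rw [join_apply, join_apply, joinFun_of_gt h α β (by dsimp only; omega),
      joinFun_of_gt h α' β' (by dsimp only; omega)] at this
    simpa using this

end Join

namespace GenPattern

theorem occ_of_lt_imp_lt {k n : ℕ} {p : GenPattern k} {π : Perm (Fin n)} {f : Fin k → Fin n}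
    (hf : StrictMono f) (hp : ∀ x y, p.perm x < p.perm y → π (f x) < π (f y))
    (hadj : ∀ j ∈ p.adj, ∀ hj : j + 1 < k, (f ⟨j + 1, hj⟩ : ℕ) = f ⟨j, by omega⟩ + 1) :
    p.Occ π f := by
  refine ⟨hf, fun x y => ⟨fun hxy => ?_, hp x y⟩, hadj⟩
  rcases lt_trichotomy (p.perm x) (p.perm y) with hlt | heq | hgt
  · exact hlt
  · rw [p.perm.injective heq] at hxy
    exact absurd hxy (lt_irrefl _)
  · exact absurd (hp y x hgt) hxy.not_gt

theorem exists_pat132_occ {n : ℕ} {π : Perm (Fin n)} {i j l : Fin n} (hij : i < j) (hjl : j < l)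
    (hil : π i < π l) (hlj : π l < π j) : ∃ f, pat132.Occ π f := by
  refine ⟨![i, j, l], occ_of_lt_imp_lt ?_ ?_ (fun _ hj => absurd hj (Set.notMem_empty _))⟩
  · refine Fin.strictMono_iff_lt_succ.2 fun t => ?_
    fin_cases t
    exacts [hij, hjl]
  · intro x y hxy
    fin_cases x <;> fin_cases y <;> first | exact absurd hxy (by decide) | skip
    exacts [hil.trans hlj, hil, hlj]

section Join
variable {a b n k ℓ : ℕ} (h : a + b = n) {α : Perm (Fin a)} {β : Perm (Fin b)}

theorem exists_occ_left_of_occ_join {p : GenPattern k} {f : Fin k → Fin (n + 1)}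
    (hf : p.Occ (join h α β) f) (hin : ∀ x, (f x : ℕ) < a) : ∃ g, p.Occ α g :=
  ⟨_, hf.restrict (isPatternAt_join_left h α β) fun x => ⟨Nat.zero_le _, by simpa using hin x⟩⟩

theorem exists_occ_right_of_occ_join {p : GenPattern k} {f : Fin k → Fin (n + 1)}
    (hf : p.Occ (join h α β) f) (hin : ∀ x, a < (f x : ℕ)) : ∃ g, p.Occ β g :=
  ⟨_, hf.restrict (isPatternAt_join_right h α β) fun x =>
    ⟨hin x, by have := (f x).isLt; omega⟩⟩

theorem pat132_avoids_join :
    pat132.Avoids (join h α β) ↔ pat132.Avoids α ∧ pat132.Avoids β := by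
  refine ⟨fun hπ => ⟨fun ⟨g, hg⟩ => hπ ⟨_, hg.shift (by omega) (isPatternAt_join_left h α β)⟩,
    fun ⟨g, hg⟩ => hπ ⟨_, hg.shift (by omega) (isPatternAt_join_right h α β)⟩⟩, ?_⟩
  rintro ⟨hα, hβ⟩ ⟨f, hf⟩
  have h02 : join h α β (f 0) < join h α β (f 2) := (hf.2.1 0 2).2 (by decide)
  have h21 : join h α β (f 2) < join h α β (f 1) := (hf.2.1 2 1).2 (by decide)
  by_cases h0 : a < (f 0 : ℕ)
  · exact hβ (exists_occ_right_of_occ_join h hf fun x =>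
      h0.trans_le (hf.1.monotone (Fin.zero_le x)))
  · have h2a : (f 2 : ℕ) ≤ a := by
      by_contra h2a
      exact (join_lt_join h α β (not_lt.1 h0) (not_le.1 h2a)).not_gt h02
    have h2 : (f 2 : ℕ) < a := h2a.lt_of_ne fun he =>
      (h21.trans_le (Fin.le_last _)).ne (join_eq_last h α β he)
    exact hα (exists_occ_left_of_occ_join h hf fun x =>
      lt_of_le_of_lt (hf.1.monotone (show x ≤ 2 from Fin.le_last x)) h2)

theorem avoids_join {τ : GenPattern ℓ} {τ' : GenPattern (ℓ + 1)}
    (hτ : τ.IsDashMaxExtension τ') :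
    τ'.Avoids (join h α β) ↔ τ.Avoids α ∧ τ'.Avoids β := by
  have hmax : ∀ i : Fin (n + 1), (i : ℕ) < a → join h α β i < join h α β ⟨a, by omega⟩ :=
    fun i hi => (join_eq_last h α β (i := ⟨a, by omega⟩) rfl).symm ▸ join_lt_last h α β hi.ne
  refine ⟨fun hπ => ⟨fun ⟨g, hg⟩ => hπ ⟨_, (hg.shift (by omega) (isPatternAt_join_left h α β)).snoc
      hτ fun i => ⟨Fin.mk_lt_mk.2 (by simp), hmax _ (by simp)⟩⟩,
    fun ⟨g, hg⟩ => hπ ⟨_, hg.shift (by omega) (isPatternAt_join_right h α β)⟩⟩, ?_⟩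
  rintro ⟨hα, hβ⟩ ⟨f, hf⟩
  have hlt : ∀ i : Fin ℓ, join h α β (f i.castSucc) < join h α β (f (Fin.last ℓ)) :=
    fun i => (hf.2.1 _ _).2 (hτ.perm_castSucc_lt_perm_last i)
  by_cases hl : a < (f (Fin.last ℓ) : ℕ)
  · refine hβ (exists_occ_right_of_occ_join h hf fun x => ?_)
    induction x using Fin.lastCases with
    | last => exact hl
    | cast i =>
      by_contra hi
      exact (join_lt_join h α β (not_lt.1 hi) hl).not_gt (hlt i)
  · exact hα (exists_occ_left_of_occ_join h (hf.castSucc hτ) fun i =>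
      lt_of_lt_of_le (hf.1 (Fin.castSucc_lt_last i)) (not_lt.1 hl))

end Join

end GenPattern

section Decomposition
variable {a b n : ℕ}

theorem card_le_of_forall_apply_lt_s1 {π : Perm (Fin n)} {S : Finset (Fin n)} {x : Fin n}
    (hS : ∀ y ∈ S, π y < π x) : #S ≤ π x := by
  have := card_le_card (s := S.image π) (t := Iio (π x)) fun v hv => by
    obtain ⟨y, hy, rfl⟩ := mem_image.1 hv
    exact mem_Iio.2 (hS y hy)
  rwa [card_image_of_injective _ π.injective, Fin.card_Iio] at this

theorem card_le_of_forall_apply_gt {π : Perm (Fin n)} {S : Finset (Fin n)} {x : Fin n}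
    (hS : ∀ y ∈ S, π x < π y) : #S ≤ n - 1 - π x := by
  have := card_le_card (s := S.image π) (t := Ioi (π x)) fun v hv => by
    obtain ⟨y, hy, rfl⟩ := mem_image.1 hv
    exact mem_Ioi.2 (hS y hy)
  rwa [card_image_of_injective _ π.injective, Fin.card_Ioi] at this

theorem exists_perm_of_forall_mem_Ico {π : Perm (Fin n)} {s t : ℕ} (hs : s + a ≤ n)
    (hπ : ∀ i : Fin a, t ≤ π ⟨s + i, by omega⟩ ∧ (π ⟨s + i, by omega⟩ : ℕ) < t + a) :
    ∃ α : Perm (Fin a), ∀ i : Fin a, (π ⟨s + i, by omega⟩ : ℕ) = t + α i := by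
  have hinj : Function.Injective fun i : Fin a =>
      (⟨π ⟨s + i, by omega⟩ - t, by have := hπ i; omega⟩ : Fin a) := by
    intro i j hij
    have := hπ i
    have := hπ j
    have hval : (π ⟨s + i, by omega⟩ : ℕ) = π ⟨s + j, by omega⟩ := by
      simp only [Fin.mk.injEq] at hij
      omega
    simpa [Fin.val_inj] using π.injective (Fin.ext hval)
  refine ⟨Equiv.ofBijective _ (Finite.injective_iff_bijective.1 hinj), fun i => ?_⟩
  have := hπ i
  simp only [ofBijective_apply]
  omega

theorem GenPattern.apply_lt_apply_of_avoids_pat132 {π : Perm (Fin (n + 1))}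
    (hπ : pat132.Avoids π) {m : Fin (n + 1)} (hmax : π m = Fin.last n) {i j : Fin (n + 1)}
    (hi : i ≤ m) (hj : m < j) : π j < π i := by
  have hj_last : π j < Fin.last n := (Fin.le_last _).lt_of_ne (hmax ▸ π.injective.ne hj.ne')
  rcases hi.lt_or_eq with hi | rfl
  · exact (lt_or_gt_of_ne (π.injective.ne (hi.trans hj).ne')).resolve_right fun hij =>
      hπ (GenPattern.exists_pat132_occ hi hj hij (hmax ▸ hj_last))
  · rwa [hmax]

theorem exists_join_eq (h : a + b = n) {π : Perm (Fin (n + 1))} (hπ : pat132.Avoids π)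
    (hmax : π ⟨a, by omega⟩ = Fin.last n) : ∃ α β, join h α β = π := by
  have hlast : ∀ i : Fin (n + 1), (i : ℕ) ≠ a → π i < Fin.last n := fun i hi =>
    (Fin.le_last _).lt_of_ne (hmax ▸ π.injective.ne (Fin.ne_of_val_ne hi))
  have hsep : ∀ i j : Fin (n + 1), (i : ℕ) ≤ a → a < (j : ℕ) → π j < π i := fun i j hi hj =>
    GenPattern.apply_lt_apply_of_avoids_pat132 hπ hmax (Fin.le_def.2 hi) (Fin.lt_def.2 hj)
  have hleft : ∀ i : Fin (n + 1), (i : ℕ) < a → b ≤ π i := fun i hi => by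
    have := card_le_of_forall_apply_lt_s1 (π := π) (S := Ioi ⟨a, by omega⟩) (x := i) fun y hy =>
      hsep i y hi.le (Fin.lt_def.1 (mem_Ioi.1 hy))
    simp only [Fin.card_Ioi] at this
    omega
  have hright : ∀ j : Fin (n + 1), a < (j : ℕ) → π j < b := fun j hj => by
    have := card_le_of_forall_apply_gt (π := π) (S := Iic ⟨a, by omega⟩) (x := j) fun y hy =>
      hsep y j (Fin.le_def.1 (mem_Iic.1 hy)) hj
    simp only [Fin.card_Iic] at this
    omega
  obtain ⟨α, hα⟩ := exists_perm_of_forall_mem_Ico (π := π) (s := 0) (t := b) (a := a)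
    (by omega) fun i => ⟨hleft _ (by simp), by
      have := Fin.lt_def.1 (hlast ⟨0 + i, by omega⟩ (by dsimp only; omega))
      simp only [Fin.val_last] at this
      omega⟩
  obtain ⟨β, hβ⟩ := exists_perm_of_forall_mem_Ico (π := π) (s := a + 1) (t := 0) (a := b)
    (by omega) fun j => ⟨Nat.zero_le _, by simpa using hright _ (by dsimp only; omega)⟩
  refine ⟨α, β, Equiv.ext fun i => Fin.ext ?_⟩
  rcases lt_trichotomy (i : ℕ) a with hi | hi | hi
  · rw [join_apply, joinFun_of_lt h α β hi, ← hα ⟨i, hi⟩]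
    simp
  · rw [join_eq_last h α β hi, show i = ⟨a, by omega⟩ from Fin.ext hi, hmax]
  · rw [join_apply, joinFun_of_gt h α β hi]
    simpa [show a + 1 + (i - (a + 1)) = i by omega] using (hβ ⟨i - (a + 1), by omega⟩).symm

end Decomposition

namespace GenPattern

noncomputable def numAvoiding {k : ℕ} (p : GenPattern k) (n : ℕ) : ℕ :=
  Nat.card {π : Perm (Fin n) // pat132.Avoids π ∧ p.Avoids π}

theorem Fgen_eq_mk {k : ℕ} (p : GenPattern k) :
    Fgen p = PowerSeries.mk fun n => (p.numAvoiding n : ℚ) := rfl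

theorem avoids_of_isEmpty {k : ℕ} (p : GenPattern (k + 1)) (π : Perm (Fin 0)) : p.Avoids π :=
  fun ⟨f, _⟩ => (f 0).elim0

theorem numAvoiding_zero {k : ℕ} (p : GenPattern (k + 1)) : p.numAvoiding 0 = 1 :=
  Nat.card_eq_one_iff_unique.2
    ⟨inferInstance, ⟨⟨1, pat132.avoids_of_isEmpty 1, p.avoids_of_isEmpty 1⟩⟩⟩

variable {ℓ : ℕ} {τ : GenPattern ℓ} {τ' : GenPattern (ℓ + 1)}

theorem card_fiber_eq (hτ : τ.IsDashMaxExtension τ') (N : ℕ) (i : Fin (N + 1)) :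
    Nat.card {π : {π : Perm (Fin (N + 1)) // pat132.Avoids π ∧ τ'.Avoids π} //
      π.1.symm (Fin.last N) = i} = τ.numAvoiding i * τ'.numAvoiding (N - i) := by
  have h : (i : ℕ) + (N - i) = N := by omega
  rw [numAvoiding, numAvoiding, ← Nat.card_prod]
  refine (Nat.card_congr (Equiv.ofBijective (fun x => ⟨⟨join h x.1.1 x.2.1,
    (pat132_avoids_join h).2 ⟨x.1.2.1, x.2.2.1⟩, (avoids_join h hτ).2 ⟨x.1.2.2, x.2.2.2⟩⟩,
    (Equiv.symm_apply_eq _).2 (join_eq_last h _ _ rfl).symm⟩) ⟨?_, ?_⟩)).symm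
  · rintro ⟨⟨α, _⟩, ⟨β, _⟩⟩ ⟨⟨α', _⟩, ⟨β', _⟩⟩ he
    obtain ⟨rfl, rfl⟩ := join_injective h α β (congrArg (fun x => x.1.1) he)
    rfl
  · rintro ⟨⟨π, h132, hτ'⟩, hi⟩
    obtain ⟨α, β, rfl⟩ := exists_join_eq h h132 ((Equiv.symm_apply_eq _).1 hi).symm
    obtain ⟨hα132, hβ132⟩ := (pat132_avoids_join h).1 h132
    obtain ⟨hατ, hβτ⟩ := (avoids_join h hτ).1 hτ'
    exact ⟨⟨⟨α, hα132, hατ⟩, ⟨β, hβ132, hβτ⟩⟩, rfl⟩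

theorem numAvoiding_succ (hτ : τ.IsDashMaxExtension τ') (N : ℕ) :
    τ'.numAvoiding (N + 1) = ∑ i : Fin (N + 1), τ.numAvoiding i * τ'.numAvoiding (N - i) := by
  rw [numAvoiding, ← Nat.card_congr (Equiv.sigmaFiberEquiv fun π :
    {π : Perm (Fin (N + 1)) // pat132.Avoids π ∧ τ'.Avoids π} => π.1.symm (Fin.last N)),
    Nat.card_sigma]
  exact Finset.sum_congr rfl fun i _ => card_fiber_eq hτ N i

theorem Fgen_eq_one_add_X_mul (hτ : τ.IsDashMaxExtension τ') :
    Fgen τ' = 1 + X * (Fgen τ * Fgen τ') := by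
  ext (_ | N)
  · simp [Fgen_eq_mk, numAvoiding_zero]
  · rw [map_add, coeff_succ_X_mul, coeff_mul, coeff_one, if_neg N.succ_ne_zero, zero_add,
      Finset.Nat.sum_antidiagonal_eq_sum_range_succ_mk, ← Fin.sum_univ_eq_sum_range]
    simp [Fgen_eq_mk, numAvoiding_succ hτ]

theorem pat132_avoids_one {n : ℕ} : pat132.Avoids (1 : Perm (Fin n)) := fun ⟨f, hf⟩ =>
  ((hf.2.1 2 1).2 (by decide)).not_gt (hf.1 (by decide : (1 : Fin 3) < 2))

theorem pat132_avoids_revPerm {n : ℕ} : pat132.Avoids (Fin.revPerm : Perm (Fin n)) :=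
  fun ⟨f, hf⟩ => by
    have h01 := (hf.2.1 0 1).2 (by decide)
    rw [Fin.revPerm_apply, Fin.revPerm_apply, Fin.rev_lt_rev] at h01
    exact h01.not_gt (hf.1 (by decide : (0 : Fin 3) < 1))

theorem Avoids.castSucc_lt_succ_iff {m : ℕ} {p : GenPattern 2} {π : Perm (Fin (m + 1))}
    (hp : p.Avoids π) (i : Fin m) : π i.castSucc < π i.succ ↔ ¬ p.perm 0 < p.perm 1 := by
  by_contra hne
  refine hp ⟨![i.castSucc, i.succ], occ_of_lt_imp_lt ?_ ?_ ?_⟩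
  · exact Fin.strictMono_iff_lt_succ.2 fun t => by fin_cases t; exact i.castSucc_lt_succ
  · intro x y hxy
    fin_cases x <;> fin_cases y
    · exact absurd hxy (lt_irrefl _)
    · exact not_not.1 fun h => hne (iff_of_false h (not_not.2 hxy))
    · exact (lt_or_gt_of_ne (π.injective.ne i.castSucc_lt_succ.ne')).resolve_right
        fun h => hne (iff_of_true h hxy.asymm)
    · exact absurd hxy (lt_irrefl _)
  · intro j _ hj
    obtain rfl : j = 0 := by omega
    simp

theorem avoids_iff_of_length_two {n : ℕ} (p : GenPattern 2) (π : Perm (Fin n)) :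
    p.Avoids π ↔ π = if p.perm 0 < p.perm 1 then Fin.revPerm else 1 := by
  refine ⟨fun hp => ?_, ?_⟩
  · rcases n with _ | m
    · exact Subsingleton.elim _ _
    split_ifs with hc
    · have hanti : StrictAnti π := Fin.strictAnti_iff_succ_lt.2 fun i =>
        (lt_or_gt_of_ne (π.injective.ne i.castSucc_lt_succ.ne')).resolve_right
          fun h => (hp.castSucc_lt_succ_iff i).1 h hc
      have hmono : StrictMono (Fin.rev ∘ π) := fun x y hxy => Fin.rev_lt_rev.2 (hanti hxy)
      exact Equiv.ext fun x => by simpa [← Fin.rev_eq_iff] using hmono.apply_eq (x := x)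
    · have hmono : StrictMono π := Fin.strictMono_iff_lt_succ.2 fun i =>
        (hp.castSucc_lt_succ_iff i).2 hc
      exact Equiv.ext fun x => hmono.apply_eq
  · rintro rfl ⟨f, hf⟩
    have h01 := hf.2.1 0 1
    have hf01 := hf.1 (show (0 : Fin 2) < 1 by decide)
    split_ifs at h01 with hc
    · rw [Fin.revPerm_apply, Fin.revPerm_apply, Fin.rev_lt_rev] at h01
      exact (h01.2 hc).not_gt hf01
    · exact hc (h01.1 hf01)

theorem numAvoiding_of_length_two (p : GenPattern 2) (n : ℕ) : p.numAvoiding n = 1 := by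
  refine Nat.card_eq_one_iff_unique.2 ⟨⟨fun x y => Subtype.ext ?_⟩,
    ⟨⟨_, ?_, (avoids_iff_of_length_two p _).2 rfl⟩⟩⟩
  · exact ((avoids_iff_of_length_two p _).1 x.2.2).trans
      ((avoids_iff_of_length_two p _).1 y.2.2).symm
  · split_ifs
    exacts [pat132_avoids_revPerm, pat132_avoids_one]

theorem one_sub_X_mul_Fgen_of_length_two (p : GenPattern 2) : (1 - X) * Fgen p = 1 := by
  rw [Fgen_eq_mk, mul_comm]
  simp only [numAvoiding_of_length_two, Nat.cast_one]
  exact mk_one_mul_one_sub_eq_one ℚ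

theorem V_mul_Fgen_of_isDashMaxExtension {ℓ : ℕ} {τ : GenPattern (ℓ + 1)}
    {τ' : GenPattern (ℓ + 2)} (hτ : τ.IsDashMaxExtension τ') (h : V (ℓ + 1) * Fgen τ = V ℓ) :
    V (ℓ + 2) * Fgen τ' = V (ℓ + 1) := by
  have hV : V (ℓ + 2) = V (ℓ + 1) - X * V ℓ := rfl
  rw [hV]
  linear_combination V (ℓ + 1) * Fgen_eq_one_add_X_mul hτ + X * Fgen τ' * h

theorem V_mul_Fgen_of_chain (T : ∀ m, GenPattern (m + 2))
    (hT : ∀ m, (T m).IsDashMaxExtension (T (m + 1))) (m : ℕ) :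
    V (m + 2) * Fgen (T m) = V (m + 1) := by
  induction m with
  | zero =>
    show (1 - X * 1) * Fgen (T 0) = 1
    rw [mul_one]
    exact one_sub_X_mul_Fgen_of_length_two (T 0)
  | succ m ih => exact V_mul_Fgen_of_isDashMaxExtension (hT m) ih

theorem isDashMaxExtension_mk {ℓ : ℕ} {ρ : Perm (Fin ℓ)} {ρ' : Perm (Fin (ℓ + 1))} {A : Set ℕ}
    (hρ : ∀ i, ρ' i.castSucc = (ρ i).castSucc) (hA : ∀ j ∈ A, j + 1 < ℓ) :
    IsDashMaxExtension ⟨ρ, A⟩ ⟨ρ', A⟩ :=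
  ⟨hρ, fun j _ => ⟨fun hj => ⟨hj, hA j hj⟩, And.left⟩⟩

end GenPattern

/-- For `τ ∈ {12, 1-2, 21, 2-1}` and `k ≥ 2`,
`F_{τ-3-4-⋯-k}(x) = R_k(x) = V_{k−1}(x)/V_k(x)`, i.e.
`V_k(x)·F_{τ-3-4-⋯-k}(x) = V_{k−1}(x)`. -/
theorem statement1 (k : ℕ) (hk : 2 ≤ k) (σ : Equiv.Perm (Fin k)) (A : Set ℕ)
    (hσ : σ = 1 ∨ σ = Equiv.swap (⟨0, by omega⟩ : Fin k) (⟨1, by omega⟩ : Fin k))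
    (hA : A = (∅ : Set ℕ) ∨ A = ({0} : Set ℕ)) :
    V k * Fgen (⟨σ, A⟩ : GenPattern k) = V (k - 1) := by
  obtain ⟨m, rfl⟩ : ∃ m, k = m + 2 := ⟨k - 2, by omega⟩
  have hA' : ∀ ℓ, ∀ j ∈ A, j + 1 < ℓ + 2 := by rcases hA with rfl | rfl <;> simp
  rcases hσ with rfl | rfl
  · exact GenPattern.V_mul_Fgen_of_chain (fun _ => ⟨1, A⟩)
      (fun ℓ => GenPattern.isDashMaxExtension_mk (fun _ => rfl) (hA' ℓ)) m
  · exact GenPattern.V_mul_Fgen_of_chain (fun ℓ => ⟨swap ⟨0, by omega⟩ ⟨1, by omega⟩, A⟩)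
      (fun ℓ => GenPattern.isDashMaxExtension_mk
        (fun i => (Fin.castSucc_injective _).swap_apply ⟨0, by omega⟩ ⟨1, by omega⟩ i) (hA' ℓ)) m
end

section
/- (i) The number of permutations of {1,…,n} avoiding both the classical pattern 1-3-2 and the dashless pattern 132 equals the n-th Catalan number; equivalently F_{132}(x) = (1 − √(1−4x))/(2x). (ii) The number of permutations of {1,…,n} avoiding both 1-3-2 and the dashless pattern 231 equals 2^{n−1} for all n≥1; equivalently F_{231}(x) = (1−x)/(1−2x). -/
open Finset PowerSeries

/-- The dashless pattern 132. -/
def pat132d : GenPattern 3 := ⟨Equiv.swap 1 2, {0, 1}⟩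

/-- The dashless pattern 231: the permutation `(0↦1, 1↦2, 2↦0)`. -/
def pat231 : GenPattern 3 := ⟨Equiv.swap 0 2 * Equiv.swap 0 1, {0, 1}⟩

namespace Stmt8

lemma iff_of_three {n : ℕ} (u : Fin 3 → Fin n) (p : Equiv.Perm (Fin 3))
    (h : ∀ a b : Fin 3, p a < p b → u a < u b) :
    ∀ a b : Fin 3, u a < u b ↔ p a < p b := by
  intro a b
  constructor
  · intro hlt
    rcases lt_trichotomy (p a) (p b) with hc | hc | hc
    · exact hc
    · cases p.injective hc; exact absurd hlt (lt_irrefl _)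
    · exact absurd hlt (not_lt.2 (le_of_lt (h b a hc)))
  · exact h a b

lemma occ132_iff {n : ℕ} (π : Equiv.Perm (Fin n)) :
    (∃ f, pat132.Occ π f) ↔
      ∃ i j k : Fin n, i < j ∧ j < k ∧ π i < π k ∧ π k < π j := by
  constructor
  · rintro ⟨f, hmono, hord, -⟩
    exact ⟨f 0, f 1, f 2, hmono (by decide), hmono (by decide),
      (hord 0 2).2 (by decide), (hord 2 1).2 (by decide)⟩
  · rintro ⟨i, j, k, hij, hjk, h1, h2⟩
    refine ⟨![i, j, k], ?_, ?_, ?_⟩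
    · intro a b hab
      fin_cases a <;> fin_cases b <;>
        first
          | exact absurd hab (by decide)
          | exact hij | exact hjk | exact hij.trans hjk
    · apply iff_of_three (π ∘ ![i, j, k]) pat132.perm
      intro a b hab
      fin_cases a <;> fin_cases b <;>
        first
          | exact absurd hab (by decide)
          | exact h1 | exact h2 | exact h1.trans h2
    · intro j hj
      simp [pat132] at hj

lemma occ132d_iff {n : ℕ} (π : Equiv.Perm (Fin n)) :
    (∃ f, pat132d.Occ π f) ↔
      ∃ (i : ℕ) (h : i + 2 < n),
        π ⟨i, by omega⟩ < π ⟨i + 2, h⟩ ∧ π ⟨i + 2, h⟩ < π ⟨i + 1, by omega⟩ := by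
  constructor
  · rintro ⟨f, hmono, hord, hadj⟩
    have a1 : ((f 1 : Fin n) : ℕ) = (f 0 : ℕ) + 1 := hadj 0 (by simp [pat132d]) (by norm_num)
    have a2 : ((f 2 : Fin n) : ℕ) = (f 1 : ℕ) + 1 := hadj 1 (by simp [pat132d]) (by norm_num)
    have hlt : (f 0 : ℕ) + 2 < n := by have := (f 2).isLt; omega
    refine ⟨(f 0 : ℕ), hlt, ?_, ?_⟩
    · have e0 : (⟨(f 0 : ℕ), by omega⟩ : Fin n) = f 0 := rfl
      have e2 : (⟨(f 0 : ℕ) + 2, hlt⟩ : Fin n) = f 2 := Fin.ext (by simp only [Fin.val_mk]; omega)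
      rw [e0, e2]; exact (hord 0 2).2 (by decide)
    · have e1 : (⟨(f 0 : ℕ) + 1, by omega⟩ : Fin n) = f 1 := Fin.ext (by simp only [Fin.val_mk]; omega)
      have e2 : (⟨(f 0 : ℕ) + 2, hlt⟩ : Fin n) = f 2 := Fin.ext (by simp only [Fin.val_mk]; omega)
      rw [e1, e2]; exact (hord 2 1).2 (by decide)
  · rintro ⟨i, h, h1, h2⟩
    refine ⟨![⟨i, by omega⟩, ⟨i + 1, by omega⟩, ⟨i + 2, h⟩], ?_, ?_, ?_⟩
    · intro a b hab
      fin_cases a <;> fin_cases b <;>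
        first
          | exact absurd hab (by decide)
          | exact Fin.mk_lt_mk.2 (by omega)
    · apply iff_of_three _ pat132d.perm
      intro a b hab
      fin_cases a <;> fin_cases b <;>
        first
          | exact absurd hab (by decide)
          | exact h1 | exact h2 | exact h1.trans h2
    · intro j hj hjlt
      simp only [pat132d, Set.mem_insert_iff, Set.mem_singleton_iff] at hj
      rcases hj with rfl | rfl <;> rfl

lemma occ231_iff {n : ℕ} (π : Equiv.Perm (Fin n)) :
    (∃ f, pat231.Occ π f) ↔
      ∃ (i : ℕ) (h : i + 2 < n),
        π ⟨i + 2, h⟩ < π ⟨i, by omega⟩ ∧ π ⟨i, by omega⟩ < π ⟨i + 1, by omega⟩ := by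
  constructor
  · rintro ⟨f, hmono, hord, hadj⟩
    have a1 : ((f 1 : Fin n) : ℕ) = (f 0 : ℕ) + 1 := hadj 0 (by simp [pat231]) (by norm_num)
    have a2 : ((f 2 : Fin n) : ℕ) = (f 1 : ℕ) + 1 := hadj 1 (by simp [pat231]) (by norm_num)
    have hlt : (f 0 : ℕ) + 2 < n := by have := (f 2).isLt; omega
    have e0 : (⟨(f 0 : ℕ), by omega⟩ : Fin n) = f 0 := rfl
    have e1 : (⟨(f 0 : ℕ) + 1, by omega⟩ : Fin n) = f 1 := Fin.ext (by simp only [Fin.val_mk]; omega)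
    have e2 : (⟨(f 0 : ℕ) + 2, hlt⟩ : Fin n) = f 2 := Fin.ext (by simp only [Fin.val_mk]; omega)
    refine ⟨(f 0 : ℕ), hlt, ?_, ?_⟩
    · rw [e0, e2]; exact (hord 2 0).2 (by decide)
    · rw [e0, e1]; exact (hord 0 1).2 (by decide)
  · rintro ⟨i, h, h1, h2⟩
    refine ⟨![⟨i, by omega⟩, ⟨i + 1, by omega⟩, ⟨i + 2, h⟩], ?_, ?_, ?_⟩
    · intro a b hab
      fin_cases a <;> fin_cases b <;>
        first
          | exact absurd hab (by decide)
          | exact Fin.mk_lt_mk.2 (by omega)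
    · apply iff_of_three _ pat231.perm
      intro a b hab
      fin_cases a <;> fin_cases b <;>
        first
          | exact absurd hab (by decide)
          | exact h1 | exact h2 | exact h1.trans h2
    · intro j hj hjlt
      simp only [pat231, Set.mem_insert_iff, Set.mem_singleton_iff] at hj
      rcases hj with rfl | rfl <;> rfl



/-- The permutation `L (shifted up by b) , max , R` of `Fin (a+b+1)`. -/
def combFun (a b : ℕ) (L : Equiv.Perm (Fin a)) (R : Equiv.Perm (Fin b)) :
    Fin (a + b + 1) → Fin (a + b + 1) := fun i =>
  if h : (i : ℕ) < a then ⟨b + L ⟨i, h⟩, by have := (L ⟨i, h⟩).isLt; omega⟩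
  else if h2 : (i : ℕ) = a then ⟨a + b, by omega⟩
  else ⟨R ⟨(i : ℕ) - a - 1, by have := i.isLt; omega⟩,
    by have := (R ⟨(i : ℕ) - a - 1, by have := i.isLt; omega⟩).isLt; omega⟩

lemma combFun_left (a b : ℕ) (L : Equiv.Perm (Fin a)) (R : Equiv.Perm (Fin b))
    (i : Fin (a + b + 1)) (h : (i : ℕ) < a) :
    ((combFun a b L R i : Fin (a+b+1)) : ℕ) = b + L ⟨i, h⟩ := by
  unfold combFun; rw [dif_pos h]

lemma combFun_mid (a b : ℕ) (L : Equiv.Perm (Fin a)) (R : Equiv.Perm (Fin b))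
    (i : Fin (a + b + 1)) (h : (i : ℕ) = a) :
    ((combFun a b L R i : Fin (a+b+1)) : ℕ) = a + b := by
  unfold combFun; rw [dif_neg (by omega), dif_pos h]

lemma combFun_right (a b : ℕ) (L : Equiv.Perm (Fin a)) (R : Equiv.Perm (Fin b))
    (i : Fin (a + b + 1)) (h : a < (i : ℕ)) :
    ((combFun a b L R i : Fin (a+b+1)) : ℕ)
      = R ⟨(i : ℕ) - a - 1, by have := i.isLt; omega⟩ := by
  unfold combFun; rw [dif_neg (by omega), dif_neg (by omega)]

lemma combFun_injective (a b : ℕ) (L : Equiv.Perm (Fin a)) (R : Equiv.Perm (Fin b)) :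
    Function.Injective (combFun a b L R) := by
  intro i j hij
  have hv := congrArg Fin.val hij
  have hi' := i.isLt; have hj' := j.isLt
  apply Fin.ext
  rcases lt_trichotomy (i : ℕ) a with hi | hi | hi <;>
    rcases lt_trichotomy (j : ℕ) a with hj | hj | hj
  · rw [combFun_left a b L R i hi, combFun_left a b L R j hj] at hv
    have : L ⟨(i:ℕ), hi⟩ = L ⟨(j:ℕ), hj⟩ := Fin.ext (by omega)
    have h2 : ((⟨(i:ℕ), hi⟩ : Fin a) : ℕ) = ((⟨(j:ℕ), hj⟩ : Fin a) : ℕ) :=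
      congrArg Fin.val (L.injective this)
    exact h2
  · rw [combFun_left a b L R i hi, combFun_mid a b L R j hj] at hv
    have := (L ⟨(i:ℕ), hi⟩).isLt; omega
  · rw [combFun_left a b L R i hi, combFun_right a b L R j hj] at hv
    have := (L ⟨(i:ℕ), hi⟩).isLt
    have := (R ⟨(j:ℕ) - a - 1, by omega⟩).isLt; omega
  · rw [combFun_mid a b L R i hi, combFun_left a b L R j hj] at hv
    have := (L ⟨(j:ℕ), hj⟩).isLt; omega
  · omega
  · rw [combFun_mid a b L R i hi, combFun_right a b L R j hj] at hv
    have := (R ⟨(j:ℕ) - a - 1, by omega⟩).isLt; omega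
  · rw [combFun_right a b L R i hi, combFun_left a b L R j hj] at hv
    have := (L ⟨(j:ℕ), hj⟩).isLt
    have := (R ⟨(i:ℕ) - a - 1, by omega⟩).isLt; omega
  · rw [combFun_right a b L R i hi, combFun_mid a b L R j hj] at hv
    have := (R ⟨(i:ℕ) - a - 1, by omega⟩).isLt; omega
  · rw [combFun_right a b L R i hi, combFun_right a b L R j hj] at hv
    have : R ⟨(i:ℕ) - a - 1, by omega⟩ = R ⟨(j:ℕ) - a - 1, by omega⟩ := Fin.ext hv
    have := congrArg Fin.val (R.injective this)
    simp only [Fin.val_mk] at this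
    omega

/-- `comb a b L R` as a permutation. -/
noncomputable def comb (a b : ℕ) (L : Equiv.Perm (Fin a)) (R : Equiv.Perm (Fin b)) :
    Equiv.Perm (Fin (a + b + 1)) :=
  Equiv.ofBijective _ (Finite.injective_iff_bijective.mp (combFun_injective a b L R))

lemma comb_left (a b : ℕ) (L : Equiv.Perm (Fin a)) (R : Equiv.Perm (Fin b))
    (i : Fin (a + b + 1)) (h : (i : ℕ) < a) :
    ((comb a b L R i : Fin (a+b+1)) : ℕ) = b + L ⟨i, h⟩ :=
  combFun_left a b L R i h

lemma comb_mid (a b : ℕ) (L : Equiv.Perm (Fin a)) (R : Equiv.Perm (Fin b))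
    (i : Fin (a + b + 1)) (h : (i : ℕ) = a) :
    ((comb a b L R i : Fin (a+b+1)) : ℕ) = a + b :=
  combFun_mid a b L R i h

lemma comb_right (a b : ℕ) (L : Equiv.Perm (Fin a)) (R : Equiv.Perm (Fin b))
    (i : Fin (a + b + 1)) (h : a < (i : ℕ)) :
    ((comb a b L R i : Fin (a+b+1)) : ℕ)
      = R ⟨(i : ℕ) - a - 1, by have := i.isLt; omega⟩ :=
  combFun_right a b L R i h



lemma comb_left' (a b : ℕ) (L : Equiv.Perm (Fin a)) (R : Equiv.Perm (Fin b))
    (i : ℕ) (hi : i < a) (h : i < a + b + 1) :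
    ((comb a b L R ⟨i, h⟩ : Fin (a+b+1)) : ℕ) = b + L ⟨i, hi⟩ :=
  comb_left a b L R ⟨i, h⟩ hi

lemma comb_mid' (a b : ℕ) (L : Equiv.Perm (Fin a)) (R : Equiv.Perm (Fin b))
    (i : ℕ) (hi : i = a) (h : i < a + b + 1) :
    ((comb a b L R ⟨i, h⟩ : Fin (a+b+1)) : ℕ) = a + b :=
  comb_mid a b L R ⟨i, h⟩ hi

lemma comb_right' (a b : ℕ) (L : Equiv.Perm (Fin a)) (R : Equiv.Perm (Fin b))
    (i : ℕ) (hi : a < i) (h : i < a + b + 1) (j : ℕ) (hj : j < b) (hij : i = a + 1 + j) :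
    ((comb a b L R ⟨i, h⟩ : Fin (a+b+1)) : ℕ) = R ⟨j, hj⟩ := by
  have e : (⟨((⟨i, h⟩ : Fin (a+b+1)) : ℕ) - a - 1,
      by have := (⟨i, h⟩ : Fin (a+b+1)).isLt; omega⟩ : Fin b) = ⟨j, hj⟩ :=
    Fin.ext (by simp only [Fin.val_mk]; omega)
  rw [comb_right a b L R ⟨i, h⟩ hi, e]

lemma comb_occ132 (a b : ℕ) (L : Equiv.Perm (Fin a)) (R : Equiv.Perm (Fin b)) :
    (∃ f, pat132.Occ (comb a b L R) f) ↔
      (∃ f, pat132.Occ L f) ∨ (∃ f, pat132.Occ R f) := by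
  rw [occ132_iff, occ132_iff, occ132_iff]
  constructor
  · rintro ⟨i, j, k, hij, hjk, h1, h2⟩
    rw [Fin.lt_def] at hij hjk h1 h2
    have hπk := (comb a b L R k).isLt
    have hπj := (comb a b L R j).isLt
    have hkk := k.isLt
    have hjj := j.isLt
    have hii := i.isLt
    rcases lt_trichotomy (i : ℕ) a with hi | hi | hi
    · rcases lt_trichotomy (k : ℕ) a with hk | hk | hk
      · -- all in L
        left
        have hj : (j : ℕ) < a := by omega
        have vi := comb_left' a b L R i hi i.isLt
        have vj := comb_left' a b L R j hj j.isLt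
        have vk := comb_left' a b L R k hk k.isLt
        simp only [Fin.eta] at vi vj vk
        exact ⟨⟨i, hi⟩, ⟨j, hj⟩, ⟨k, hk⟩, Fin.mk_lt_mk.2 hij, Fin.mk_lt_mk.2 hjk,
          Fin.lt_def.2 (by omega), Fin.lt_def.2 (by omega)⟩
      · have vk := comb_mid' a b L R k hk k.isLt
        simp only [Fin.eta] at vk
        omega
      · have vi := comb_left' a b L R i hi i.isLt
        have vk := comb_right' a b L R k hk k.isLt ((k:ℕ) - a - 1) (by omega) (by omega)
        have := (L ⟨(i:ℕ), hi⟩).isLt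
        have := (R ⟨(k:ℕ) - a - 1, by omega⟩).isLt
        simp only [Fin.eta] at vi vk
        omega
    · have vi := comb_mid' a b L R i hi i.isLt
      simp only [Fin.eta] at vi
      omega
    · -- all in R
      right
      have hj : a < (j : ℕ) := by omega
      have hk : a < (k : ℕ) := by omega
      have vi := comb_right' a b L R i hi i.isLt ((i:ℕ) - a - 1) (by omega) (by omega)
      have vj := comb_right' a b L R j hj j.isLt ((j:ℕ) - a - 1) (by omega) (by omega)
      have vk := comb_right' a b L R k hk k.isLt ((k:ℕ) - a - 1) (by omega) (by omega)
      simp only [Fin.eta] at vi vj vk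
      exact ⟨⟨(i:ℕ) - a - 1, by omega⟩, ⟨(j:ℕ) - a - 1, by omega⟩,
        ⟨(k:ℕ) - a - 1, by omega⟩,
        Fin.mk_lt_mk.2 (by omega), Fin.mk_lt_mk.2 (by omega),
        Fin.lt_def.2 (by omega), Fin.lt_def.2 (by omega)⟩
  · rintro (⟨i, j, k, hij, hjk, h1, h2⟩ | ⟨i, j, k, hij, hjk, h1, h2⟩)
    · rw [Fin.lt_def] at hij hjk h1 h2
      have hii := i.isLt; have hjj := j.isLt; have hkk := k.isLt
      have vi := comb_left' a b L R (i:ℕ) hii (by omega)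
      have vj := comb_left' a b L R (j:ℕ) hjj (by omega)
      have vk := comb_left' a b L R (k:ℕ) hkk (by omega)
      simp only [Fin.eta] at vi vj vk
      exact ⟨⟨(i:ℕ), by omega⟩, ⟨(j:ℕ), by omega⟩, ⟨(k:ℕ), by omega⟩,
        Fin.mk_lt_mk.2 hij, Fin.mk_lt_mk.2 hjk,
        Fin.lt_def.2 (by omega), Fin.lt_def.2 (by omega)⟩
    · rw [Fin.lt_def] at hij hjk h1 h2
      have hii := i.isLt; have hjj := j.isLt; have hkk := k.isLt
      have vi := comb_right' a b L R (a + 1 + (i:ℕ)) (by omega) (by omega) (i:ℕ) hii (by omega)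
      have vj := comb_right' a b L R (a + 1 + (j:ℕ)) (by omega) (by omega) (j:ℕ) hjj (by omega)
      have vk := comb_right' a b L R (a + 1 + (k:ℕ)) (by omega) (by omega) (k:ℕ) hkk (by omega)
      simp only [Fin.eta] at vi vj vk
      exact ⟨⟨a + 1 + (i:ℕ), by omega⟩, ⟨a + 1 + (j:ℕ), by omega⟩, ⟨a + 1 + (k:ℕ), by omega⟩,
        Fin.mk_lt_mk.2 (by omega), Fin.mk_lt_mk.2 (by omega),
        Fin.lt_def.2 (by omega), Fin.lt_def.2 (by omega)⟩

lemma comb_occ231 (a b : ℕ) (L : Equiv.Perm (Fin a)) (R : Equiv.Perm (Fin b)) :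
    (∃ f, pat231.Occ (comb a b L R) f) ↔
      (∃ f, pat231.Occ L f) ∨ (∃ f, pat231.Occ R f) ∨ (0 < a ∧ 0 < b) := by
  rw [occ231_iff, occ231_iff, occ231_iff]
  constructor
  · rintro ⟨i, h, h1, h2⟩
    rw [Fin.lt_def] at h1 h2
    rcases lt_trichotomy (i + 2) a with hc | hc | hc
    · left
      have v0 := comb_left' a b L R i (by omega) (by omega)
      have v1 := comb_left' a b L R (i + 1) (by omega) (by omega)
      have v2 := comb_left' a b L R (i + 2) (by omega) h
      exact ⟨i, by omega, Fin.lt_def.2 (by omega), Fin.lt_def.2 (by omega)⟩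
    · -- i + 2 = a: value at i+2 is the max, contradicting π(i+2) < π i
      have v2 := comb_mid' a b L R (i + 2) hc h
      have := (comb a b L R ⟨i, by omega⟩).isLt
      omega
    · rcases lt_trichotomy (i + 1) a with hd | hd | hd
      · omega
      · right; right
        exact ⟨by omega, by omega⟩
      · rcases lt_trichotomy i a with he | he | he
        · omega
        · have v0 := comb_mid' a b L R i he (by omega)
          have := (comb a b L R ⟨i + 1, by omega⟩).isLt
          omega
        · right; left
          have v0 := comb_right' a b L R i he (by omega) (i - a - 1) (by omega) (by omega)
          have v1 := comb_right' a b L R (i + 1) (by omega) (by omega)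
            (i - a - 1 + 1) (by omega) (by omega)
          have v2 := comb_right' a b L R (i + 2) (by omega) h
            (i - a - 1 + 2) (by omega) (by omega)
          exact ⟨i - a - 1, by omega, Fin.lt_def.2 (by omega), Fin.lt_def.2 (by omega)⟩
  · rintro (⟨i, h, h1, h2⟩ | ⟨i, h, h1, h2⟩ | ⟨ha, hb⟩)
    · rw [Fin.lt_def] at h1 h2
      have v0 := comb_left' a b L R i (by omega) (by omega)
      have v1 := comb_left' a b L R (i + 1) (by omega) (by omega)
      have v2 := comb_left' a b L R (i + 2) (by omega) (by omega)
      exact ⟨i, by omega, Fin.lt_def.2 (by omega), Fin.lt_def.2 (by omega)⟩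
    · rw [Fin.lt_def] at h1 h2
      have v0 := comb_right' a b L R (a + 1 + i) (by omega) (by omega) i (by omega) (by omega)
      have v1 := comb_right' a b L R (a + 1 + i + 1) (by omega) (by omega)
        (i + 1) (by omega) (by omega)
      have v2 := comb_right' a b L R (a + 1 + i + 2) (by omega) (by omega)
        (i + 2) (by omega) (by omega)
      refine ⟨a + 1 + i, by omega, Fin.lt_def.2 ?_, Fin.lt_def.2 ?_⟩ <;> omega
    · -- the spanning occurrence at positions a-1, a, a+1
      have v0 := comb_left' a b L R (a - 1) (by omega) (by omega)
      have v1 := comb_mid' a b L R (a - 1 + 1) (by omega) (by omega)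
      have v2 := comb_right' a b L R (a - 1 + 2) (by omega) (by omega) 0 hb (by omega)
      have hL := (L ⟨a - 1, by omega⟩).isLt
      have hR := (R ⟨0, hb⟩).isLt
      refine ⟨a - 1, by omega, Fin.lt_def.2 ?_, Fin.lt_def.2 ?_⟩ <;> omega



lemma cross_lt {n : ℕ} (π : Equiv.Perm (Fin (n+1))) (hav : pat132.Avoids π)
    (i k : Fin (n+1)) (hi : i < π.symm (Fin.last n)) (hk : π.symm (Fin.last n) < k) :
    π k < π i := by
  by_contra hle
  push_neg at hle
  have hne : π i ≠ π k := fun hh => by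
    have := π.injective hh
    subst this
    exact absurd hk (not_lt.2 (le_of_lt hi))
  have h1 : π i < π k := lt_of_le_of_ne hle hne
  have h2 : π k < π (π.symm (Fin.last n)) := by
    rw [Equiv.apply_symm_apply]
    refine lt_of_le_of_ne (Fin.le_last _) fun hh => ?_
    have : k = π.symm (Fin.last n) := by
      rw [← hh, Equiv.symm_apply_apply]
    exact absurd (this ▸ hk) (lt_irrefl _)
  exact hav ((occ132_iff π).2 ⟨i, π.symm (Fin.last n), k, hi, hk, h1, h2⟩)

lemma val_ge_of_lt {n : ℕ} (π : Equiv.Perm (Fin (n+1))) (hav : pat132.Avoids π)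
    (i : Fin (n+1)) (hi : i < π.symm (Fin.last n)) :
    n - (π.symm (Fin.last n) : ℕ) ≤ (π i : ℕ) := by
  classical
  have h1 : ((Finset.Ioi (π.symm (Fin.last n))).image π).card
      = n - ((π.symm (Fin.last n)) : ℕ) := by
    rw [Finset.card_image_of_injective _ π.injective, Fin.card_Ioi]
    omega
  have h2 : (Finset.Ioi (π.symm (Fin.last n))).image π ⊆ Finset.Iio (π i) := by
    intro v hv
    simp only [Finset.mem_image, Finset.mem_Ioi] at hv
    obtain ⟨k, hk, rfl⟩ := hv
    exact Finset.mem_Iio.2 (cross_lt π hav i k hi hk)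
  have h3 := Finset.card_le_card h2
  rwa [h1, Fin.card_Iio] at h3

lemma val_lt_of_gt {n : ℕ} (π : Equiv.Perm (Fin (n+1))) (hav : pat132.Avoids π)
    (i : Fin (n+1)) (hi : π.symm (Fin.last n) < i) :
    (π i : ℕ) < n - ((π.symm (Fin.last n)) : ℕ) := by
  classical
  have h1 : ((Finset.Iic (π.symm (Fin.last n))).image π).card
      = ((π.symm (Fin.last n)) : ℕ) + 1 := by
    rw [Finset.card_image_of_injective _ π.injective, Fin.card_Iic]
  have h2 : (Finset.Iic (π.symm (Fin.last n))).image π ⊆ Finset.Ioi (π i) := by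
    intro v hv
    simp only [Finset.mem_image, Finset.mem_Iic] at hv
    obtain ⟨k, hk, rfl⟩ := hv
    rcases lt_or_eq_of_le hk with hk' | rfl
    · exact Finset.mem_Ioi.2 (cross_lt π hav k i hk' hi)
    · rw [Equiv.apply_symm_apply]
      refine Finset.mem_Ioi.2 (lt_of_le_of_ne (Fin.le_last _) fun hh => ?_)
      have : i = π.symm (Fin.last n) := by rw [← hh, Equiv.symm_apply_apply]
      exact absurd (this ▸ hi) (lt_irrefl _)
  have h3 := Finset.card_le_card h2
  rw [h1, Fin.card_Ioi] at h3
  have := i.isLt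
  have := (π.symm (Fin.last n)).isLt
  omega

/-- The canonical permutation of `Fin (n+1)` built from a splitting point and two
smaller permutations. -/
noncomputable def mkPerm {n : ℕ} (m : Fin (n+1)) (L : Equiv.Perm (Fin (m:ℕ)))
    (R : Equiv.Perm (Fin (n - (m:ℕ)))) : Equiv.Perm (Fin (n+1)) :=
  (finCongr (by have := m.isLt; omega : (m:ℕ) + (n - (m:ℕ)) + 1 = n + 1)).permCongr
    (comb (m:ℕ) (n - (m:ℕ)) L R)

lemma mkPerm_val {n : ℕ} (m : Fin (n+1)) (L : Equiv.Perm (Fin (m:ℕ)))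
    (R : Equiv.Perm (Fin (n - (m:ℕ)))) (i : Fin (n+1)) :
    ((mkPerm m L R i : Fin (n+1)) : ℕ)
      = ((comb (m:ℕ) (n - (m:ℕ)) L R
          ⟨(i:ℕ), by have := i.isLt; have := m.isLt; omega⟩ : Fin _) : ℕ) := rfl

lemma avoids_permCongr {k N M : ℕ} (h : N = M) (p : GenPattern k) (π : Equiv.Perm (Fin N)) :
    p.Avoids ((finCongr h).permCongr π) ↔ p.Avoids π := by
  subst h
  have : (finCongr rfl : Fin N ≃ Fin N).permCongr π = π := by
    ext x
    simp [finCongr_refl]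
  rw [this]

lemma mkPerm_avoids {n : ℕ} (m : Fin (n+1)) (L : Equiv.Perm (Fin (m:ℕ)))
    (R : Equiv.Perm (Fin (n - (m:ℕ)))) (p : GenPattern 3) :
    p.Avoids (mkPerm m L R) ↔ p.Avoids (comb (m:ℕ) (n - (m:ℕ)) L R) :=
  avoids_permCongr _ p _

lemma mkPerm_symm_last {n : ℕ} (m : Fin (n+1)) (L : Equiv.Perm (Fin (m:ℕ)))
    (R : Equiv.Perm (Fin (n - (m:ℕ)))) :
    (mkPerm m L R).symm (Fin.last n) = m := by
  rw [Equiv.symm_apply_eq]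
  apply Fin.ext
  rw [show ((Fin.last n : Fin (n+1)) : ℕ) = n from rfl]
  rw [mkPerm_val]
  rw [comb_mid' _ _ L R (m:ℕ) rfl]
  have := m.isLt; omega



/-- The decomposition data for a permutation of `Fin (n+1)`. -/
def SigT (P : ∀ N : ℕ, Equiv.Perm (Fin N) → Prop) (C : ℕ → ℕ → Prop) (n : ℕ) : Type :=
  Σ m : Fin (n+1), ({L : Equiv.Perm (Fin (m:ℕ)) // P _ L} ×
    {R : Equiv.Perm (Fin (n - (m:ℕ))) // P _ R}) × PLift (C (m:ℕ) (n - (m:ℕ)))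

noncomputable def Phi (P : ∀ N : ℕ, Equiv.Perm (Fin N) → Prop) (C : ℕ → ℕ → Prop)
    (hcomb : ∀ (a b : ℕ) (L : Equiv.Perm (Fin a)) (R : Equiv.Perm (Fin b)),
      P _ (comb a b L R) ↔ (P _ L ∧ P _ R ∧ C a b))
    (hcast : ∀ {N M : ℕ} (h : N = M) (π : Equiv.Perm (Fin N)),
      P _ ((finCongr h).permCongr π) ↔ P _ π)
    (n : ℕ) : SigT P C n → {π : Equiv.Perm (Fin (n+1)) // P _ π} :=
  fun x =>
    ⟨mkPerm x.1 x.2.1.1.1 x.2.1.2.1,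
     (hcast _ _).2 ((hcomb _ _ _ _).2 ⟨x.2.1.1.2, x.2.1.2.2, x.2.2.down⟩)⟩

set_option maxHeartbeats 1000000 in
lemma Phi_injective (P : ∀ N : ℕ, Equiv.Perm (Fin N) → Prop) (C : ℕ → ℕ → Prop)
    (hcomb : ∀ (a b : ℕ) (L : Equiv.Perm (Fin a)) (R : Equiv.Perm (Fin b)),
      P _ (comb a b L R) ↔ (P _ L ∧ P _ R ∧ C a b))
    (hcast : ∀ {N M : ℕ} (h : N = M) (π : Equiv.Perm (Fin N)),
      P _ ((finCongr h).permCongr π) ↔ P _ π)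
    (n : ℕ) : Function.Injective (Phi P C hcomb hcast n) := by
  rintro ⟨m, ⟨⟨L, hL⟩, ⟨R, hR⟩⟩, ⟨hc⟩⟩ ⟨m', ⟨⟨L', hL'⟩, ⟨R', hR'⟩⟩, ⟨hc'⟩⟩ h
  simp only [Phi, Subtype.mk.injEq] at h
  replace h : mkPerm m L R = mkPerm m' L' R' := congrArg Subtype.val h
  obtain rfl : m = m' := by
    rw [← mkPerm_symm_last m L R, ← mkPerm_symm_last m' L' R', h]
  obtain rfl : L = L' := by
    apply Equiv.ext
    intro x
    apply Fin.ext
    have hx := x.isLt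
    have hm := m.isLt
    have v := congrArg (fun π => ((π (⟨(x:ℕ), by omega⟩ : Fin (n+1)) : Fin (n+1)) : ℕ)) h
    simp only [mkPerm_val] at v
    rw [comb_left' _ _ L R (x:ℕ) hx, comb_left' _ _ L' R' (x:ℕ) hx] at v
    simp only [Fin.eta] at v
    omega
  obtain rfl : R = R' := by
    apply Equiv.ext
    intro x
    apply Fin.ext
    have hx := x.isLt
    have hm := m.isLt
    have v := congrArg
      (fun π => ((π (⟨(m:ℕ) + 1 + (x:ℕ), by omega⟩ : Fin (n+1)) : Fin (n+1)) : ℕ)) h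
    simp only [mkPerm_val] at v
    rw [comb_right' _ _ L R ((m:ℕ) + 1 + (x:ℕ)) (by omega) (by omega) (x:ℕ) hx rfl,
        comb_right' _ _ L R' ((m:ℕ) + 1 + (x:ℕ)) (by omega) (by omega) (x:ℕ) hx rfl] at v
    simp only [Fin.eta] at v
    omega
  rfl

set_option maxHeartbeats 1000000 in
lemma Phi_surjective (P : ∀ N : ℕ, Equiv.Perm (Fin N) → Prop) (C : ℕ → ℕ → Prop)
    (hav : ∀ {N : ℕ} (π : Equiv.Perm (Fin N)), P _ π → pat132.Avoids π)
    (hcomb : ∀ (a b : ℕ) (L : Equiv.Perm (Fin a)) (R : Equiv.Perm (Fin b)),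
      P _ (comb a b L R) ↔ (P _ L ∧ P _ R ∧ C a b))
    (hcast : ∀ {N M : ℕ} (h : N = M) (π : Equiv.Perm (Fin N)),
      P _ ((finCongr h).permCongr π) ↔ P _ π)
    (n : ℕ) : Function.Surjective (Phi P C hcomb hcast n) := by
  rintro ⟨π, hP⟩
  have hav132 : pat132.Avoids π := hav π hP
  set m : Fin (n+1) := π.symm (Fin.last n) with hm
  have hmn := m.isLt
  have hLval : ∀ x : Fin (m:ℕ), ((π ⟨(x:ℕ), by omega⟩ : Fin (n+1)) : ℕ) < n ∧
      n - (m:ℕ) ≤ ((π ⟨(x:ℕ), by omega⟩ : Fin (n+1)) : ℕ) := by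
    intro x
    have hx := x.isLt
    constructor
    · have hne : π ⟨(x:ℕ), by omega⟩ ≠ Fin.last n := by
        intro hh
        have h2 : π ⟨(x:ℕ), by omega⟩ = π m := by
          rw [hh, hm, Equiv.apply_symm_apply]
        have h3 := congrArg Fin.val (π.injective h2)
        simp only [Fin.val_mk] at h3
        omega
      have h1 : ((π ⟨(x:ℕ), by omega⟩ : Fin (n+1)) : ℕ) ≠ n := fun hh =>
        hne (Fin.ext hh)
      have := (π ⟨(x:ℕ), by omega⟩).isLt
      omega
    · exact val_ge_of_lt π hav132 _ (Fin.lt_def.2 (by simp only [Fin.val_mk]; omega))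
  have hRval : ∀ x : Fin (n - (m:ℕ)),
      ((π ⟨(m:ℕ) + 1 + (x:ℕ), by have := x.isLt; omega⟩ : Fin (n+1)) : ℕ) < n - (m:ℕ) := by
    intro x
    have hx := x.isLt
    exact val_lt_of_gt π hav132 _ (Fin.lt_def.2 (by simp only [Fin.val_mk]; omega))
  set Lfun : Fin (m:ℕ) → Fin (m:ℕ) := fun x =>
    ⟨((π ⟨(x:ℕ), by have := x.isLt; omega⟩ : Fin (n+1)) : ℕ) - (n - (m:ℕ)),
      by have := hLval x; omega⟩ with hLfun
  have hLinj : Function.Injective Lfun := by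
    intro x y hxy
    have hvx := hLval x; have hvy := hLval y
    have h4 := congrArg Fin.val hxy
    simp only [hLfun, Fin.val_mk] at h4
    have hval : ((π ⟨(x:ℕ), by have := x.isLt; omega⟩ : Fin (n+1)) : ℕ)
        = ((π ⟨(y:ℕ), by have := y.isLt; omega⟩ : Fin (n+1)) : ℕ) := by omega
    have h5 := congrArg Fin.val (π.injective (Fin.ext hval))
    simp only [Fin.val_mk] at h5
    exact Fin.ext h5
  set L : Equiv.Perm (Fin (m:ℕ)) :=
    Equiv.ofBijective _ (Finite.injective_iff_bijective.mp hLinj) with hL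
  set Rfun : Fin (n - (m:ℕ)) → Fin (n - (m:ℕ)) := fun x =>
    ⟨((π ⟨(m:ℕ) + 1 + (x:ℕ), by have := x.isLt; omega⟩ : Fin (n+1)) : ℕ), hRval x⟩
    with hRfun
  have hRinj : Function.Injective Rfun := by
    intro x y hxy
    have h4 := congrArg Fin.val hxy
    simp only [hRfun, Fin.val_mk] at h4
    have h5 := congrArg Fin.val (π.injective (Fin.ext h4))
    simp only [Fin.val_mk] at h5
    exact Fin.ext (by omega)
  set R : Equiv.Perm (Fin (n - (m:ℕ))) :=
    Equiv.ofBijective _ (Finite.injective_iff_bijective.mp hRinj) with hR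
  have key : mkPerm m L R = π := by
    apply Equiv.ext
    intro i
    apply Fin.ext
    rw [mkPerm_val]
    have hii := i.isLt
    rcases lt_trichotomy (i:ℕ) (m:ℕ) with hc | hc | hc
    · rw [comb_left' _ _ L R (i:ℕ) hc]
      have h6 : ((L ⟨(i:ℕ), hc⟩ : Fin (m:ℕ)) : ℕ)
          = ((π ⟨(i:ℕ), by omega⟩ : Fin (n+1)) : ℕ) - (n - (m:ℕ)) := rfl
      rw [h6]
      have h7 := hLval ⟨(i:ℕ), hc⟩
      simp only [Fin.val_mk] at h7
      have heq : (⟨(i:ℕ), by omega⟩ : Fin (n+1)) = i := Fin.ext rfl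
      rw [heq] at h7 ⊢
      omega
    · rw [comb_mid' _ _ L R (i:ℕ) hc]
      have h8 : i = m := Fin.ext hc
      rw [h8, hm, Equiv.apply_symm_apply]
      rw [show ((Fin.last n : Fin (n+1)) : ℕ) = n from rfl]
      omega
    · rw [comb_right' _ _ L R (i:ℕ) hc (by omega) ((i:ℕ) - (m:ℕ) - 1) (by omega) (by omega)]
      have h9 : ((R ⟨(i:ℕ) - (m:ℕ) - 1, by omega⟩ : Fin (n - (m:ℕ))) : ℕ)
          = ((π ⟨(m:ℕ) + 1 + ((i:ℕ) - (m:ℕ) - 1), by omega⟩ : Fin (n+1)) : ℕ) := rfl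
      rw [h9]
      have heq : (⟨(m:ℕ) + 1 + ((i:ℕ) - (m:ℕ) - 1), by omega⟩ : Fin (n+1)) = i :=
        Fin.ext (by simp only [Fin.val_mk]; omega)
      rw [heq]
  have hPcomb : P _ (comb (m:ℕ) (n - (m:ℕ)) L R) := by
    have h1 : P _ (mkPerm m L R) := by rw [key]; exact hP
    exact (hcast _ _).1 h1
  obtain ⟨hL', hR', hC⟩ := (hcomb _ _ L R).1 hPcomb
  exact ⟨⟨m, ⟨⟨L, hL'⟩, ⟨R, hR'⟩⟩, ⟨hC⟩⟩, Subtype.ext key⟩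

set_option maxHeartbeats 1000000 in
theorem card_rec (P : ∀ N : ℕ, Equiv.Perm (Fin N) → Prop) (C : ℕ → ℕ → Prop)
    (hav : ∀ {N : ℕ} (π : Equiv.Perm (Fin N)), P _ π → pat132.Avoids π)
    (hcomb : ∀ (a b : ℕ) (L : Equiv.Perm (Fin a)) (R : Equiv.Perm (Fin b)),
      P _ (comb a b L R) ↔ (P _ L ∧ P _ R ∧ C a b))
    (hcast : ∀ {N M : ℕ} (h : N = M) (π : Equiv.Perm (Fin N)),
      P _ ((finCongr h).permCongr π) ↔ P _ π)
    (n : ℕ) :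
    Nat.card {π : Equiv.Perm (Fin (n+1)) // P _ π} =
      ∑ m ∈ Finset.range (n+1),
        Nat.card {L : Equiv.Perm (Fin m) // P _ L} *
        (Nat.card {R : Equiv.Perm (Fin (n - m)) // P _ R} *
         Nat.card (PLift (C m (n - m)))) := by
  classical
  have e : SigT P C n ≃ {π : Equiv.Perm (Fin (n+1)) // P _ π} :=
    Equiv.ofBijective _ ⟨Phi_injective P C hcomb @hcast n,
      Phi_surjective P C @hav hcomb @hcast n⟩
  rw [← Nat.card_congr e]
  haveI : ∀ N, DecidablePred fun π : Equiv.Perm (Fin N) => P N π := fun N => Classical.decPred _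
  haveI : ∀ a b : ℕ, Decidable (C a b) := fun a b => Classical.dec _
  have h1 : Nat.card (SigT P C n)
      = ∑ m : Fin (n+1),
        Nat.card (({L : Equiv.Perm (Fin (m:ℕ)) // P _ L} ×
          {R : Equiv.Perm (Fin (n - (m:ℕ))) // P _ R}) × PLift (C (m:ℕ) (n - (m:ℕ)))) := by
    rw [show (SigT P C n) = (Σ m : Fin (n+1), ({L : Equiv.Perm (Fin (m:ℕ)) // P _ L} ×
      {R : Equiv.Perm (Fin (n - (m:ℕ))) // P _ R}) × PLift (C (m:ℕ) (n - (m:ℕ)))) from rfl]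
    rw [Nat.card_eq_fintype_card, Fintype.card_sigma]
    congr 1
    funext m
    rw [Nat.card_eq_fintype_card]
  rw [h1, ← Fin.sum_univ_eq_sum_range]
  congr 1
  funext m
  rw [Nat.card_prod, Nat.card_prod, mul_assoc]


lemma card_plift (c : Prop) [Decidable c] : Nat.card (PLift c) = if c then 1 else 0 := by
  split_ifs with h
  · exact Nat.card_eq_one_iff_unique.mpr ⟨⟨fun a b => by cases a; cases b; rfl⟩, ⟨⟨h⟩⟩⟩
  · exact @Nat.card_of_isEmpty _ ⟨fun a => h a.down⟩

lemma avoids_of_lt3 {n : ℕ} (hn : n < 3) (p : GenPattern 3) (π : Equiv.Perm (Fin n)) :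
    p.Avoids π := by
  rintro ⟨f, hmono, -, -⟩
  have h01 := hmono (show (0:Fin 3) < 1 by decide)
  have h12 := hmono (show (1:Fin 3) < 2 by decide)
  have h0 := (f 0).isLt; have h1 := (f 1).isLt; have h2 := (f 2).isLt
  rw [Fin.lt_def] at h01 h12
  omega

lemma av132_imp_av132d {n : ℕ} {π : Equiv.Perm (Fin n)} (h : pat132.Avoids π) :
    pat132d.Avoids π := by
  rintro ⟨f, hmono, hord, hadj⟩
  exact h ⟨f, hmono, hord, fun j hj => by simp [pat132] at hj⟩

lemma card_subtype_perm_zero (Q : Equiv.Perm (Fin 0) → Prop)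
    (hQ : ∀ π, Q π) : Nat.card {π : Equiv.Perm (Fin 0) // Q π} = 1 := by
  rw [Nat.card_congr (Equiv.subtypeUnivEquiv hQ), Nat.card_eq_fintype_card,
    Fintype.card_perm]
  simp

/-! ### Part (i) : avoiding 1-3-2 and dashless 132 -/

lemma P1_hcomb (a b : ℕ) (L : Equiv.Perm (Fin a)) (R : Equiv.Perm (Fin b)) :
    (pat132.Avoids (comb a b L R) ∧ pat132d.Avoids (comb a b L R)) ↔
      ((pat132.Avoids L ∧ pat132d.Avoids L) ∧ (pat132.Avoids R ∧ pat132d.Avoids R) ∧ True) := by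
  have h1 : ∀ {N : ℕ} (π : Equiv.Perm (Fin N)),
      (pat132.Avoids π ∧ pat132d.Avoids π) ↔ pat132.Avoids π :=
    fun π => ⟨And.left, fun h => ⟨h, av132_imp_av132d h⟩⟩
  rw [h1, h1, h1]
  have := comb_occ132 a b L R
  unfold GenPattern.Avoids
  rw [this]
  tauto

lemma F_succ (n : ℕ) :
    Nat.card {π : Equiv.Perm (Fin (n+1)) // pat132.Avoids π ∧ pat132d.Avoids π} =
      ∑ m ∈ Finset.range (n+1),
        Nat.card {L : Equiv.Perm (Fin m) // pat132.Avoids L ∧ pat132d.Avoids L} *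
        Nat.card {R : Equiv.Perm (Fin (n - m)) // pat132.Avoids R ∧ pat132d.Avoids R} := by
  have h := card_rec (fun N π => pat132.Avoids π ∧ pat132d.Avoids π) (fun _ _ => True)
    (fun π hπ => hπ.1) P1_hcomb
    (fun h π => by
      show (pat132.Avoids ((finCongr h).permCongr π) ∧
          pat132d.Avoids ((finCongr h).permCongr π)) ↔
          (pat132.Avoids π ∧ pat132d.Avoids π)
      rw [avoids_permCongr, avoids_permCongr]) n
  rw [h]
  apply Finset.sum_congr rfl
  intro m _
  rw [card_plift]
  simp

lemma F_eq_catalan (n : ℕ) :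
    Nat.card {π : Equiv.Perm (Fin n) // pat132.Avoids π ∧ pat132d.Avoids π} = catalan n := by
  induction n using Nat.strong_induction_on with
  | _ n ih =>
    match n with
    | 0 =>
      rw [card_subtype_perm_zero _ (fun π => ⟨avoids_of_lt3 (by norm_num) _ π,
        avoids_of_lt3 (by norm_num) _ π⟩)]
      simp
    | n + 1 =>
      rw [F_succ n, catalan_succ]
      rw [← Fin.sum_univ_eq_sum_range]
      apply Finset.sum_congr rfl
      intro m _
      rw [ih m (by have := m.isLt; omega), ih (n - (m:ℕ)) (by have := m.isLt; omega)]

/-! ### Part (ii) : avoiding 1-3-2 and dashless 231 -/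

lemma P2_hcomb (a b : ℕ) (L : Equiv.Perm (Fin a)) (R : Equiv.Perm (Fin b)) :
    (pat132.Avoids (comb a b L R) ∧ pat231.Avoids (comb a b L R)) ↔
      ((pat132.Avoids L ∧ pat231.Avoids L) ∧ (pat132.Avoids R ∧ pat231.Avoids R) ∧
        (a = 0 ∨ b = 0)) := by
  have h132 := comb_occ132 a b L R
  have h231 := comb_occ231 a b L R
  unfold GenPattern.Avoids
  rw [h132, h231, not_or, not_or, not_or]
  have hab : ¬(0 < a ∧ 0 < b) ↔ (a = 0 ∨ b = 0) := by omega
  rw [hab]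
  constructor
  · rintro ⟨⟨hA, hB⟩, hC, hD, hE⟩
    exact ⟨⟨hA, hC⟩, ⟨hB, hD⟩, hE⟩
  · rintro ⟨⟨hA, hC⟩, ⟨hB, hD⟩, hE⟩
    exact ⟨⟨hA, hB⟩, hC, hD, hE⟩

lemma G_succ (n : ℕ) :
    Nat.card {π : Equiv.Perm (Fin (n+1)) // pat132.Avoids π ∧ pat231.Avoids π} =
      ∑ m ∈ Finset.range (n+1),
        Nat.card {L : Equiv.Perm (Fin m) // pat132.Avoids L ∧ pat231.Avoids L} *
        (Nat.card {R : Equiv.Perm (Fin (n - m)) // pat132.Avoids R ∧ pat231.Avoids R} *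
          (if m = 0 ∨ n - m = 0 then 1 else 0)) := by
  classical
  have h := card_rec (fun N π => pat132.Avoids π ∧ pat231.Avoids π)
    (fun a b => a = 0 ∨ b = 0)
    (fun π hπ => hπ.1) P2_hcomb
    (fun h π => by
      show (pat132.Avoids ((finCongr h).permCongr π) ∧
          pat231.Avoids ((finCongr h).permCongr π)) ↔
          (pat132.Avoids π ∧ pat231.Avoids π)
      rw [avoids_permCongr, avoids_permCongr]) n
  rw [h]
  apply Finset.sum_congr rfl
  intro m _
  rw [card_plift]

lemma G_zero :
    Nat.card {π : Equiv.Perm (Fin 0) // pat132.Avoids π ∧ pat231.Avoids π} = 1 :=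
  card_subtype_perm_zero _ (fun π => ⟨avoids_of_lt3 (by norm_num) _ π,
    avoids_of_lt3 (by norm_num) _ π⟩)

lemma G_one :
    Nat.card {π : Equiv.Perm (Fin 1) // pat132.Avoids π ∧ pat231.Avoids π} = 1 := by
  rw [G_succ 0]
  simp [G_zero]

lemma G_two_mul (n : ℕ) (hn : 1 ≤ n) :
    Nat.card {π : Equiv.Perm (Fin (n+1)) // pat132.Avoids π ∧ pat231.Avoids π} =
      2 * Nat.card {π : Equiv.Perm (Fin n) // pat132.Avoids π ∧ pat231.Avoids π} := by
  classical
  rw [G_succ n, Finset.sum_range_succ]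
  have hlast : Nat.card {L : Equiv.Perm (Fin n) // pat132.Avoids L ∧ pat231.Avoids L} *
      (Nat.card {R : Equiv.Perm (Fin (n - n)) // pat132.Avoids R ∧ pat231.Avoids R} *
        (if n = 0 ∨ n - n = 0 then 1 else 0)) =
      Nat.card {π : Equiv.Perm (Fin n) // pat132.Avoids π ∧ pat231.Avoids π} := by
    rw [if_pos (Or.inr (by omega))]
    rw [show n - n = 0 from by omega, G_zero]
    ring
  rw [hlast]
  have hsum : ∑ m ∈ Finset.range n,
      Nat.card {L : Equiv.Perm (Fin m) // pat132.Avoids L ∧ pat231.Avoids L} *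
      (Nat.card {R : Equiv.Perm (Fin (n - m)) // pat132.Avoids R ∧ pat231.Avoids R} *
        (if m = 0 ∨ n - m = 0 then 1 else 0)) =
      Nat.card {π : Equiv.Perm (Fin n) // pat132.Avoids π ∧ pat231.Avoids π} := by
    rw [Finset.sum_eq_single_of_mem 0 (Finset.mem_range.2 (by omega))]
    · rw [if_pos (Or.inl rfl), G_zero]
      simp
    · intro m hm hm0
      rw [if_neg (by rw [Finset.mem_range] at hm; omega)]
      ring
  rw [hsum]
  ring

lemma G_eq_pow (n : ℕ) (hn : 1 ≤ n) :
    Nat.card {π : Equiv.Perm (Fin n) // pat132.Avoids π ∧ pat231.Avoids π} = 2 ^ (n - 1) := by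
  induction n with
  | zero => omega
  | succ n ih =>
    rcases Nat.eq_or_lt_of_le hn with h1 | h1
    · rw [← h1]
      exact G_one
    · have hn' : 1 ≤ n := by omega
      rw [G_two_mul n hn', ih hn']
      rw [show n + 1 - 1 = (n - 1) + 1 from by omega, pow_succ]
      ring



lemma catalanPS :
    (PowerSeries.mk fun n => (catalan n : ℚ)) =
      1 + PowerSeries.X * (PowerSeries.mk fun n => (catalan n : ℚ)) ^ 2 := by
  ext n
  cases n with
  | zero =>
    simp [PowerSeries.coeff_zero_eq_constantCoeff]
  | succ n =>
    rw [map_add, PowerSeries.coeff_one, if_neg (Nat.succ_ne_zero n),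
      PowerSeries.coeff_succ_X_mul, pow_two, PowerSeries.coeff_mul]
    simp only [PowerSeries.coeff_mk]
    rw [catalan_succ']
    push_cast
    rw [zero_add]


end Stmt8

/-- (i) permutations avoiding 1-3-2 and the dashless 132 are counted by the
Catalan numbers, i.e. `F_{132} = (1−√(1−4x))/(2x)`; (ii) permutations avoiding
1-3-2 and the dashless 231 are counted by `2^{n−1}`, i.e.
`F_{231} = (1−x)/(1−2x)`. -/
theorem statement8 :
    (∀ n : ℕ, Nat.card {π : Equiv.Perm (Fin n) //
        pat132.Avoids π ∧ pat132d.Avoids π} = catalan n) ∧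
    (∃ s : PowerSeries ℚ, s ^ 2 = 1 - 4 * PowerSeries.X ∧
        PowerSeries.constantCoeff s = 1 ∧
        2 * PowerSeries.X * Fgen pat132d = 1 - s) ∧
    (∀ n : ℕ, 1 ≤ n → Nat.card {π : Equiv.Perm (Fin n) //
        pat132.Avoids π ∧ pat231.Avoids π} = 2 ^ (n - 1)) ∧
    (1 - 2 * PowerSeries.X) * Fgen pat231 = 1 - PowerSeries.X := by
  have hF : Fgen pat132d = PowerSeries.mk fun n => (catalan n : ℚ) := by
    apply PowerSeries.ext
    intro n
    simp only [Fgen, PowerSeries.coeff_mk]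
    rw [Stmt8.F_eq_catalan n]
  have hG : Fgen pat231
      = PowerSeries.mk fun n => if n = 0 then (1:ℚ) else 2 ^ (n-1) := by
    apply PowerSeries.ext
    intro n
    simp only [Fgen, PowerSeries.coeff_mk]
    cases n with
    | zero => rw [Stmt8.G_zero]; norm_num
    | succ n =>
      rw [Stmt8.G_eq_pow (n+1) (by omega), if_neg (Nat.succ_ne_zero n)]
      push_cast
      rfl
  refine ⟨Stmt8.F_eq_catalan, ⟨1 - 2 * PowerSeries.X * Fgen pat132d, ?_, ?_, by ring⟩,
    fun n hn => Stmt8.G_eq_pow n hn, ?_⟩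
  · rw [hF]
    linear_combination (-4 * (PowerSeries.X : PowerSeries ℚ)) * Stmt8.catalanPS
  · rw [hF]
    simp
  · rw [hG]
    apply PowerSeries.ext
    intro n
    have h2 : ((1:PowerSeries ℚ) - 2 * PowerSeries.X) *
        (PowerSeries.mk fun n => if n = 0 then (1:ℚ) else 2 ^ (n-1)) =
        (PowerSeries.mk fun n => if n = 0 then (1:ℚ) else 2 ^ (n-1)) -
        PowerSeries.C (2:ℚ) * (PowerSeries.X *
          (PowerSeries.mk fun n => if n = 0 then (1:ℚ) else 2 ^ (n-1))) := by
      rw [map_ofNat]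
      ring
    rw [h2]
    cases n with
    | zero => simp
    | succ n =>
      rw [map_sub, PowerSeries.coeff_C_mul, PowerSeries.coeff_succ_X_mul,
        PowerSeries.coeff_mk, PowerSeries.coeff_mk, map_sub, PowerSeries.coeff_one,
        PowerSeries.coeff_X, if_neg (Nat.succ_ne_zero n)]
      cases n with
      | zero => norm_num
      | succ m =>
        rw [if_neg (Nat.succ_ne_zero (m+1)), if_neg (Nat.succ_ne_zero m),
          if_neg (by omega : ¬(m + 1 + 1 = 1))]
        rw [show m + 1 + 1 - 1 = m + 1 from by omega,
          show m + 1 - 1 = m from by omega, pow_succ]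
        ring
end
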